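/- arXiv:1103.2685 — 6 statements merged into one kernel-verified Lean document; each statement's English description precedes it below -/
import Mathlib

section
/- Let G₁ and G₂ be graphs with maximum degrees d₁ = Δ(G₁) ≥ 2 and d₂ = Δ(G₂) ≥ 2. Then r(G₁, G₂) ≥ d₁ + d₂ - (1 - (-1)^((d₁-1)(d₂-1)))/2; that is, r(G₁,G₂) ≥ d₁+d₂ if (d₁-1)(d₂-1) is even, and r(G₁,G₂) ≥ d₁+d₂-1 otherwise. -/
open SimpleGraph

/-- `G` contains a copy of `H` as a subgraph. -/
def Contains {V W : Type*} (G : SimpleGraph V) (H : SimpleGraph W) : Prop :=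
  ∃ f : W ↪ V, ∀ a b, H.Adj a b → G.Adj (f a) (f b)

/-- The Turán number `ex(p; L)`: the maximum number of edges in a simple graph
on `p` vertices not containing `L` as a subgraph. -/
noncomputable def exNum (p : ℕ) {W : Type*} (L : SimpleGraph W) : ℕ :=
  sSup {k | ∃ G : SimpleGraph (Fin p), ¬ Contains G L ∧ G.edgeSet.ncard = k}

/-- The Ramsey number `r(G₁, G₂)`: the least positive `N` such that every graph on
`N` vertices contains `G₁` or its complement contains `G₂`. -/
noncomputable def ramsey {V W : Type*} (G₁ : SimpleGraph V) (G₂ : SimpleGraph W) : ℕ :=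
  sInf {N | 0 < N ∧ ∀ G : SimpleGraph (Fin N), Contains G G₁ ∨ Contains Gᶜ G₂}

/-- The tree `Tₙ*` on `n` vertices with edges `v₀v₁, …, v₀v_{n-3}, v_{n-3}v_{n-2},
v_{n-2}v_{n-1}`. -/
def Tstar (n : ℕ) : SimpleGraph (Fin n) :=
  SimpleGraph.fromRel (fun a b =>
    (a.val = 0 ∧ 1 ≤ b.val ∧ b.val ≤ n - 3) ∨ (a.val = n - 3 ∧ b.val = n - 2) ∨
      (a.val = n - 2 ∧ b.val = n - 1))

/-- The star `K_{1,n-1}` on `n` vertices with center `0`. -/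
def starGraph (n : ℕ) : SimpleGraph (Fin n) :=
  SimpleGraph.fromRel (fun a _ => a.val = 0)

/-!
An `r`-regular graph `H` on `N` vertices contains no graph of maximum degree greater than `r`,
and its complement, which is `(N - 1 - r)`-regular, contains no graph of maximum degree greater
than `N - 1 - r`. Such an `H` exists whenever `r < N` and `r N` is even: for even `r` take a
circulant graph on `Fin N`, for odd `r` the complement of an `(N - 1 - r)`-regular one. Hence
`N < r(G₁, G₂)` as soon as the window `N - d₂ ≤ r ≤ d₁ - 1` contains such an `r`. It does for
every `N < d₁ + d₂ - 1`; for `N = d₁ + d₂ - 1` the window is `{d₁ - 1}`, and `d₁ - 1` or `N` is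
even exactly when `(d₁ - 1)(d₂ - 1)` is.
-/

open Finset

namespace SimpleGraph

theorem exists_isNClique_or_compl_isNClique {V : Type*} (G : SimpleGraph V) :
    ∀ (s t : ℕ) (A : Finset V), (s + t).choose s ≤ #A →
      (∃ S ⊆ A, G.IsNClique s S) ∨ ∃ S ⊆ A, Gᶜ.IsNClique t S
  | 0, _, _, _ => Or.inl ⟨∅, empty_subset _, by simp⟩
  | _ + 1, 0, _, _ => Or.inr ⟨∅, empty_subset _, by simp⟩
  | s + 1, t + 1, A, hA => by
    classical
    obtain ⟨v, hv⟩ : A.Nonempty := card_pos.mp ((Nat.choose_pos (by omega)).trans_le hA)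
    set B := (A.erase v).filter (G.Adj v)
    set C := (A.erase v).filter (¬ G.Adj v ·)
    have hBC : #B + #C + 1 = #A := by
      rw [card_filter_add_card_filter_not, card_erase_add_one hv]
    have hsplit : (s + (t + 1)).choose s ≤ #B ∨ (s + 1 + t).choose (s + 1) ≤ #C := by
      rw [show s + 1 + (t + 1) = s + t + 1 + 1 by ring, Nat.choose_succ_succ'] at hA
      rw [show s + (t + 1) = s + t + 1 by ring, show s + 1 + t = s + t + 1 by ring]
      omega
    have hBA : B ⊆ A := (filter_subset _ _).trans (erase_subset _ _)
    have hCA : C ⊆ A := (filter_subset _ _).trans (erase_subset _ _)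
    rcases hsplit with hB | hC
    · rcases exists_isNClique_or_compl_isNClique G s (t + 1) B hB with ⟨S, hSB, hS⟩ | ⟨S, hSB, hS⟩
      · refine Or.inl ⟨insert v S, insert_subset hv (hSB.trans hBA), hS.insert fun b hb => ?_⟩
        exact (mem_filter.mp (hSB hb)).2
      · exact Or.inr ⟨S, hSB.trans hBA, hS⟩
    · rcases exists_isNClique_or_compl_isNClique G (s + 1) t C hC with ⟨S, hSC, hS⟩ | ⟨S, hSC, hS⟩
      · exact Or.inl ⟨S, hSC.trans hCA, hS⟩
      · refine Or.inr ⟨insert v S, insert_subset hv (hSC.trans hCA), hS.insert fun b hb => ?_⟩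
        obtain ⟨hbv, hvb⟩ := mem_filter.mp (hSC hb)
        exact ⟨(ne_of_mem_erase hbv).symm, hvb⟩

theorem circulantGraph_isRegularOfDegree {A : Type*} [AddGroup A] [Fintype A] [DecidableEq A]
    (s : Finset A) (hs₀ : 0 ∉ s) (hs : ∀ x ∈ s, -x ∈ s) :
    (circulantGraph (s : Set A)).IsRegularOfDegree #s := by
  intro v
  have hnb : (circulantGraph (s : Set A)).neighborFinset v = s.map (addRightEmbedding v) := by
    ext w
    simp only [mem_neighborFinset, circulantGraph_adj, mem_coe, mem_map, addRightEmbedding_apply]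
    constructor
    · rintro ⟨-, h | h⟩
      · exact ⟨w - v, by simpa using hs _ h, sub_add_cancel w v⟩
      · exact ⟨w - v, h, sub_add_cancel w v⟩
    · rintro ⟨a, ha, rfl⟩
      refine ⟨fun h => hs₀ ?_, Or.inr (by simpa using ha)⟩
      rwa [show a = 0 by simpa using congrArg (· - v) h.symm] at ha
  rw [← card_neighborFinset_eq_degree, hnb, card_map]

theorem exists_isRegularOfDegree_two_mul {N k : ℕ} (hk : 2 * k < N) :
    ∃ (G : SimpleGraph (Fin N)) (_ : DecidableRel G.Adj), G.IsRegularOfDegree (2 * k) := by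
  have : NeZero N := ⟨by omega⟩
  set s : Finset (Fin N) := univ.filter fun x => 0 < x.val ∧ (x.val ≤ k ∨ N - k ≤ x.val)
  have hs₀ : 0 ∉ s := by simp [s]
  have hs : ∀ x ∈ s, -x ∈ s := by
    intro x hx
    simp only [s, mem_filter, mem_univ, true_and] at hx ⊢
    rw [Fin.val_neg', Nat.mod_eq_of_lt (by omega)]
    omega
  have hcard : #s = 2 * k := by
    have hval : s.map Fin.valEmbedding = Icc 1 k ∪ Ico (N - k) N := by
      ext j
      simp only [s, mem_map, mem_filter, mem_univ, true_and, Fin.valEmbedding_apply, mem_union,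
        mem_Icc, mem_Ico]
      constructor
      · rintro ⟨x, hx, rfl⟩
        omega
      · intro hj
        exact ⟨⟨j, by omega⟩, by simp only; omega, rfl⟩
    have hdisj : Disjoint (Icc 1 k) (Ico (N - k) N) := by
      simp only [Finset.disjoint_left, mem_Icc, mem_Ico]
      omega
    rw [← card_map Fin.valEmbedding, hval, card_union_of_disjoint hdisj, Nat.card_Icc,
      Nat.card_Ico]
    omega
  exact ⟨_, inferInstance, hcard ▸ circulantGraph_isRegularOfDegree s hs₀ hs⟩

theorem exists_isRegularOfDegree {N r : ℕ} (hr : r < N) (hpar : Even r ∨ Even N) :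
    ∃ (G : SimpleGraph (Fin N)) (_ : DecidableRel G.Adj), G.IsRegularOfDegree r := by
  rcases Nat.even_or_odd r with ⟨k, rfl⟩ | hodd
  · simpa only [two_mul] using exists_isRegularOfDegree_two_mul (k := k) (by omega)
  · obtain ⟨k, hk⟩ : Even (N - 1 - r) := by
      obtain ⟨a, rfl⟩ := hpar.resolve_left (Nat.not_even_iff_odd.mpr hodd)
      obtain ⟨b, rfl⟩ := hodd
      exact ⟨a - b - 1, by omega⟩
    obtain ⟨G, _, hG⟩ := exists_isRegularOfDegree_two_mul (N := N) (k := k) (by omega)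
    refine ⟨Gᶜ, inferInstance, ?_⟩
    convert hG.compl using 1
    rw [Fintype.card_fin]
    omega

end SimpleGraph

theorem contains_iff_isContained {V W : Type*} (G : SimpleGraph V) (H : SimpleGraph W) :
    Contains G H ↔ H ⊑ G := by
  rw [isContained_iff_exists_le_comap]
  rfl

theorem contains_of_not_cliqueFree {V W : Type*} [Fintype W] {G : SimpleGraph V}
    (H : SimpleGraph W) (h : ¬ G.CliqueFree (Fintype.card W)) : Contains G H := by
  rw [contains_iff_isContained]
  exact (IsContained.of_le le_top).trans (not_free.mp (mt cliqueFree_iff_top_free.mpr h))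

theorem contains_or_compl_contains {V W₁ W₂ : Type*} [Fintype V] [Fintype W₁] [Fintype W₂]
    (G : SimpleGraph V) (G₁ : SimpleGraph W₁) (G₂ : SimpleGraph W₂)
    (hV : (Fintype.card W₁ + Fintype.card W₂).choose (Fintype.card W₁) ≤ Fintype.card V) :
    Contains G G₁ ∨ Contains Gᶜ G₂ := by
  rcases G.exists_isNClique_or_compl_isNClique _ _ univ hV with ⟨S, -, hS⟩ | ⟨S, -, hS⟩
  · exact Or.inl (contains_of_not_cliqueFree G₁ hS.not_cliqueFree)
  · exact Or.inr (contains_of_not_cliqueFree G₂ hS.not_cliqueFree)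

theorem le_ramsey_of_forall_lt {W₁ W₂ : Type*} [Fintype W₁] [Fintype W₂]
    (G₁ : SimpleGraph W₁) (G₂ : SimpleGraph W₂) {B : ℕ}
    (hB : ∀ N, 0 < N → N < B → ∃ G : SimpleGraph (Fin N), ¬ Contains G G₁ ∧ ¬ Contains Gᶜ G₂) :
    B ≤ ramsey G₁ G₂ := by
  -- `sInf ∅ = 0`, so a lower bound on `ramsey` needs Ramsey's theorem
  set R := (Fintype.card W₁ + Fintype.card W₂).choose (Fintype.card W₁)
  have hne : {N | 0 < N ∧ ∀ G : SimpleGraph (Fin N), Contains G G₁ ∨ Contains Gᶜ G₂}.Nonempty :=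
    ⟨R + 1, R.succ_pos, fun G => contains_or_compl_contains G G₁ G₂ (by simp [R])⟩
  refine le_csInf hne fun N ⟨hN, hcover⟩ => ?_
  by_contra! hlt
  obtain ⟨G, hG₁, hG₂⟩ := hB N hN hlt
  exact (hcover G).elim hG₁ hG₂

theorem not_contains_of_isRegularOfDegree {V W : Type*} [Fintype V] [Fintype W]
    {G : SimpleGraph V} [DecidableRel G.Adj] {H : SimpleGraph W} [DecidableRel H.Adj] {r : ℕ}
    (hG : G.IsRegularOfDegree r) (hr : r < H.maxDegree) : ¬ Contains G H := by
  rw [contains_iff_isContained]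
  intro hHG
  have := hHG.maxDegree_mono.trans (G.maxDegree_le_of_forall_degree_le r fun v => (hG v).le)
  omega

theorem le_ramsey_of_forall_exists_degree {W₁ W₂ : Type*} [Fintype W₁] [Fintype W₂]
    (G₁ : SimpleGraph W₁) (G₂ : SimpleGraph W₂) [DecidableRel G₁.Adj] [DecidableRel G₂.Adj] {B : ℕ}
    (hB : ∀ N, 0 < N → N < B → ∃ r < N, (Even r ∨ Even N) ∧
      r < G₁.maxDegree ∧ N ≤ r + G₂.maxDegree) :
    B ≤ ramsey G₁ G₂ := by
  refine le_ramsey_of_forall_lt G₁ G₂ fun N hN hNB => ?_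
  obtain ⟨r, hrN, hpar, hr₁, hr₂⟩ := hB N hN hNB
  obtain ⟨G, _, hG⟩ := exists_isRegularOfDegree hrN hpar
  refine ⟨G, not_contains_of_isRegularOfDegree hG hr₁,
    not_contains_of_isRegularOfDegree hG.compl ?_⟩
  rw [Fintype.card_fin]
  omega

theorem exists_regular_degree_in_window {N d₁ d₂ : ℕ} (hN : 0 < N) (hd₁ : 1 ≤ d₁) (hd₂ : 1 ≤ d₂)
    (hNd : N < d₁ + d₂) (hedge : N + 1 = d₁ + d₂ → Even ((d₁ - 1) * (d₂ - 1))) :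
    ∃ r < N, (Even r ∨ Even N) ∧ r < d₁ ∧ N ≤ r + d₂ := by
  rcases Nat.even_or_odd (N - d₂) with h | h
  · exact ⟨N - d₂, by omega, Or.inl h, by omega, by omega⟩
  by_cases hup : N - d₂ + 1 < min d₁ N
  · exact ⟨N - d₂ + 1, by omega, Or.inl h.add_one, by omega, by omega⟩
  refine ⟨N - d₂, by omega, Or.inr ?_, by omega, by omega⟩
  rw [Nat.odd_iff] at h
  rw [Nat.even_iff]
  by_cases hd : N + 1 = d₁ + d₂
  · have := Nat.even_mul.mp (hedge hd)
    simp only [Nat.even_iff] at this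
    omega
  · omega

theorem stmt2 {m n : ℕ} (G₁ : SimpleGraph (Fin m)) (G₂ : SimpleGraph (Fin n))
    [DecidableRel G₁.Adj] [DecidableRel G₂.Adj] (d₁ d₂ : ℕ)
    (h₁ : G₁.maxDegree = d₁) (h₂ : G₂.maxDegree = d₂)
    (hd₁ : 2 ≤ d₁) (hd₂ : 2 ≤ d₂) :
    (Even ((d₁ - 1) * (d₂ - 1)) → d₁ + d₂ ≤ ramsey G₁ G₂) ∧
    (¬ Even ((d₁ - 1) * (d₂ - 1)) → d₁ + d₂ - 1 ≤ ramsey G₁ G₂) := by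
  subst h₁ h₂
  refine ⟨fun heven => ?_, fun _ => ?_⟩ <;>
    refine le_ramsey_of_forall_exists_degree G₁ G₂ fun N hN hNB =>
      exists_regular_degree_in_window hN (by omega) (by omega) (by omega) fun hedge => ?_
  · exact heven
  · omega
end

section
/- For integers p ≥ n-1 ≥ 1, the maximum number of edges in a simple graph on p vertices containing no vertex of degree at least n-1 equals ⌊(n-2)p/2⌋. -/
open SimpleGraph

open Finset

/-!
If all degrees are at most `d`, the degree sum gives `2 e(G) ≤ d |V|`. Conversely every edge
count up to `⌊d |V| / 2⌋` occurs, as edges can be added one at a time while the total deficiency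
`∑ (d - deg w)` is at least `2`: then some vertices `u, v` (possibly equal) both have room for
one more edge. If they are distinct and non-adjacent, join them. Otherwise `d < |V|` gives some
`x ∉ N[u]`; join `u` and `x` if `x` has room. If not, `deg x = d > deg v`, and as `u ∈ N[v]`
but `u ∉ N(x)`, some neighbour `y` of `x` lies outside `N[v]`: replacing the edge `xy` by `ux`
and `vy` raises the degrees of `u` and `v` only.
-/

namespace SimpleGraph

def edgeCountsOfDegreeLE (V : Type*) [Fintype V] (d : ℕ) : Set ℕ :=
  {k | ∃ (G : SimpleGraph V) (_ : DecidableRel G.Adj),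
    (∀ v, G.degree v ≤ d) ∧ #G.edgeFinset = k}

variable {V : Type*} [Fintype V] (G : SimpleGraph V) [DecidableRel G.Adj] {d : ℕ}

lemma card_edgeFinset_le_of_forall_degree_le (hdeg : ∀ w, G.degree w ≤ d) :
    #G.edgeFinset ≤ d * Fintype.card V / 2 := by
  have hsum := sum_le_sum fun w (_ : w ∈ univ) => hdeg w
  rw [sum_degrees_eq_twice_card_edges, sum_const, card_univ, smul_eq_mul,
    mul_comm (Fintype.card V)] at hsum
  omega

lemma exists_degree_lt_of_card_edgeFinset_lt (hdeg : ∀ w, G.degree w ≤ d)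
    (h : #G.edgeFinset < d * Fintype.card V / 2) :
    ∃ u v, G.degree u < d ∧ G.degree v < d ∧ (u = v → G.degree u + 2 ≤ d) := by
  by_contra! hno
  have hdeficient : #{w | G.degree w < d} ≤ 1 :=
    card_le_one.2 fun u hu v hv => (hno u v (by simpa using hu) (by simpa using hv)).1
  have hdeficiency : ∑ w, (d - G.degree w) ≤ 1 :=
    calc ∑ w, (d - G.degree w) = ∑ w with G.degree w < d, (d - G.degree w) :=
          (sum_filter_of_ne fun w _ hw => by omega).symm
      _ ≤ ∑ w with G.degree w < d, 1 :=
          sum_le_sum fun w hw => by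
            have := (hno w w (by simpa using hw) (by simpa using hw)).2
            omega
      _ ≤ 1 := by simpa using hdeficient
  have hsum : ∑ w, (d - G.degree w) + 2 * #G.edgeFinset = d * Fintype.card V := by
    rw [← sum_degrees_eq_twice_card_edges, ← sum_add_distrib]
    simp [Nat.sub_add_cancel (hdeg _), mul_comm]
  omega

variable [DecidableEq V]

lemma degree_sup_edge {s t : V} (hst : s ≠ t) (hn : ¬G.Adj s t) (w : V) :
    (G ⊔ edge s t).degree w = G.degree w + if w = s ∨ w = t then 1 else 0 := by
  simp only [← card_neighborFinset_eq_degree]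
  split_ifs with hw
  · obtain ⟨z, hz, hwz⟩ : ∃ z, ¬G.Adj w z ∧ ∀ a, (edge s t).Adj w a ↔ a = z := by
      rcases hw with rfl | rfl
      · exact ⟨t, hn, fun a => by simp only [edge_adj, true_and, ne_eq]; grind⟩
      · exact ⟨s, fun h => hn h.symm, fun a => by simp only [edge_adj, true_and, ne_eq]; grind⟩
    have : (G ⊔ edge s t).neighborFinset w = insert z (G.neighborFinset w) := by
      ext a
      simp only [neighborFinset_sup, mem_union, mem_neighborFinset, hwz, mem_insert]
      tauto
    rw [this, card_insert_of_notMem (by simpa using hz)]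
  · congr 1
    ext a
    simp only [neighborFinset_sup, mem_union, mem_neighborFinset, edge_adj]
    grind

lemma exists_adj_not_adj_of_degree_lt {u v x : V} (hu : u = v ∨ G.Adj v u) (hxu : ¬G.Adj x u)
    (h : G.degree v < G.degree x) : ∃ y, G.Adj x y ∧ y ≠ v ∧ ¬G.Adj v y := by
  by_contra! hy
  have hsub : G.neighborFinset x ⊆ (insert v (G.neighborFinset v)).erase u := by
    intro y hy'
    rw [mem_neighborFinset] at hy'
    simp only [mem_erase, mem_insert, mem_neighborFinset]
    refine ⟨fun hyu => hxu (hyu ▸ hy'), ?_⟩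
    by_contra! h'
    exact h'.2 (hy y hy' h'.1)
  have hu' : u ∈ insert v (G.neighborFinset v) := by simpa [eq_comm] using hu
  have := card_le_card hsub
  rw [card_erase_of_mem hu', card_insert_of_notMem (by simp)] at this
  simp only [card_neighborFinset_eq_degree] at this
  omega

variable {G}

lemma card_edgeFinset_eq_add_one_of_degree_eq {G' : SimpleGraph V} [DecidableRel G'.Adj]
    {u v : V}
    (h : ∀ w, G'.degree w = G.degree w + (if w = u then 1 else 0) + (if w = v then 1 else 0)) :
    #G'.edgeFinset = #G.edgeFinset + 1 := by
  have := G'.sum_degrees_eq_twice_card_edges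
  simp only [h, sum_add_distrib, sum_ite_eq', mem_univ, if_true,
    sum_degrees_eq_twice_card_edges] at this
  omega

lemma exists_degree_eq_of_not_adj {u v : V} (huv : u ≠ v) (h : ¬G.Adj u v) :
    ∃ (G' : SimpleGraph V) (_ : DecidableRel G'.Adj),
      ∀ w, G'.degree w = G.degree w + (if w = u then 1 else 0) + (if w = v then 1 else 0) :=
  ⟨G ⊔ edge u v, inferInstance, fun w => by rw [degree_sup_edge G huv h]; split_ifs <;> grind⟩

lemma exists_degree_eq_of_switch {u v x y : V} (hxy : G.Adj x y) (hux : u ≠ x)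
    (hux' : ¬G.Adj u x) (hvy : v ≠ y) (hvy' : ¬G.Adj v y) :
    ∃ (G' : SimpleGraph V) (_ : DecidableRel G'.Adj),
      ∀ w, G'.degree w = G.degree w + (if w = u then 1 else 0) + (if w = v then 1 else 0) := by
  set H := G \ edge x y
  have hG : H ⊔ edge x y = G := sdiff_sup_cancel ((edge_le_iff G).2 (Or.inr hxy))
  have hHxy : ¬H.Adj x y := by simp [H, edge_adj, G.ne_of_adj hxy]
  have hHux : ¬H.Adj u x := fun h => hux' h.1
  have hHvy : ¬(H ⊔ edge u x).Adj v y := by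
    simp only [H, sup_adj, sdiff_adj, edge_adj]
    grind [G.ne_of_adj hxy]
  refine ⟨H ⊔ edge u x ⊔ edge v y, inferInstance, fun w => ?_⟩
  have hGdeg : G.degree w = H.degree w + if w = x ∨ w = y then 1 else 0 := by
    convert H.degree_sup_edge (G.ne_of_adj hxy) hHxy w
    exact hG.symm
  rw [degree_sup_edge _ hvy hHvy, degree_sup_edge _ hux hHux, hGdeg]
  have : u ≠ y := fun h => hux' (h ▸ hxy.symm)
  split_ifs <;> grind

lemma succ_mem_edgeCountsOfDegreeLE_of_degree_eq (hdeg : ∀ w, G.degree w ≤ d) {u v : V}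
    (hu : G.degree u < d) (hv : G.degree v < d) (huv : u = v → G.degree u + 2 ≤ d)
    {G' : SimpleGraph V} [DecidableRel G'.Adj]
    (h : ∀ w, G'.degree w = G.degree w + (if w = u then 1 else 0) + (if w = v then 1 else 0)) :
    #G.edgeFinset + 1 ∈ edgeCountsOfDegreeLE V d := by
  refine ⟨G', inferInstance, fun w => ?_, card_edgeFinset_eq_add_one_of_degree_eq h⟩
  rw [h]
  have := hdeg w
  split_ifs <;> grind

lemma succ_mem_edgeCountsOfDegreeLE_of_degree_lt (hd : d < Fintype.card V)
    (hdeg : ∀ w, G.degree w ≤ d) {u v : V}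
    (hu : G.degree u < d) (hv : G.degree v < d) (huv : u = v → G.degree u + 2 ≤ d) :
    #G.edgeFinset + 1 ∈ edgeCountsOfDegreeLE V d := by
  by_cases hadd : u ≠ v ∧ ¬G.Adj u v
  · obtain ⟨G', _, h⟩ := exists_degree_eq_of_not_adj hadd.1 hadd.2
    exact succ_mem_edgeCountsOfDegreeLE_of_degree_eq hdeg hu hv huv h
  obtain ⟨x, hux, hux'⟩ : ∃ x, u ≠ x ∧ ¬G.Adj u x := by
    have := (G.degree_lt_card_sub_one u).1 (by omega)
    simpa [IsUniversal] using this
  by_cases hx : G.degree x < d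
  · obtain ⟨G', _, h⟩ := exists_degree_eq_of_not_adj hux hux'
    exact succ_mem_edgeCountsOfDegreeLE_of_degree_eq hdeg hu hx (fun h => absurd h hux) h
  have hvu : u = v ∨ G.Adj v u := by
    simp only [not_and, not_not] at hadd
    exact (eq_or_ne u v).imp id fun h => (hadd h).symm
  obtain ⟨y, hxy, hvy, hvy'⟩ :=
    G.exists_adj_not_adj_of_degree_lt hvu (fun h => hux' h.symm) (by omega)
  obtain ⟨G', _, h⟩ := exists_degree_eq_of_switch hxy hux hux' hvy.symm hvy'
  exact succ_mem_edgeCountsOfDegreeLE_of_degree_eq hdeg hu hv huv h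

lemma edgeCountsOfDegreeLE_eq_Iic (hd : d < Fintype.card V) :
    edgeCountsOfDegreeLE V d = Set.Iic (d * Fintype.card V / 2) := by
  ext k
  constructor
  · rintro ⟨G, _, hdeg, rfl⟩
    exact G.card_edgeFinset_le_of_forall_degree_le hdeg
  · intro hk
    rw [Set.mem_Iic] at hk
    induction k with
    | zero => exact ⟨⊥, inferInstance, fun w => by simp, by simp⟩
    | succ k ih =>
      obtain ⟨G, _, hdeg, rfl⟩ := ih (by omega)
      obtain ⟨u, v, hu, hv, huv⟩ :=
        G.exists_degree_lt_of_card_edgeFinset_lt hdeg (by omega)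
      exact succ_mem_edgeCountsOfDegreeLE_of_degree_lt hd hdeg hu hv huv

end SimpleGraph

theorem stmt6 (p n : ℕ) (h1 : 1 ≤ n - 1) (h2 : n - 1 ≤ p) :
    sSup {k | ∃ (G : SimpleGraph (Fin p)) (_ : DecidableRel G.Adj),
      (∀ v, G.degree v < n - 1) ∧ G.edgeFinset.card = k} = (n - 2) * p / 2 := by
  have hset : {k | ∃ (G : SimpleGraph (Fin p)) (_ : DecidableRel G.Adj),
      (∀ v, G.degree v < n - 1) ∧ G.edgeFinset.card = k} =
      edgeCountsOfDegreeLE (Fin p) (n - 2) := by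
    ext k
    refine exists_congr fun G => exists_congr fun _ => and_congr_left' (forall_congr' fun v => ?_)
    omega
  rw [hset, edgeCountsOfDegreeLE_eq_Iic (by rw [Fintype.card_fin]; omega), Fintype.card_fin,
    csSup_Iic]
end

section
/- Let n ≥ 6 be an integer and let G_n be a connected graph on n vertices such that ex(2n-5; G_n) < n² - 5n + 4. Then r(G_n, T_n*) = 2n - 5, given that ex(2n-5; T_n*) = n² - 6n + 11. -/
open SimpleGraph

/-!
The lower bound `2n - 5 ≤ r(Gₙ, Tₙ*)` comes from `2K_{n-3}` (and its restrictions to fewer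
vertices): a connected graph on `n` vertices does not fit into either clique, and the complement
`K_{n-3,n-3}` cannot host `Tₙ*`, whose bipartition has a class `{v₁, …, v_{n-3}, v_{n-1}}` of
size `n - 2`. For the upper bound, a graph `G` on `2n - 5` vertices with `G ⊉ Gₙ` and
`Gᶜ ⊉ Tₙ*` would have at most `ex(2n-5; Gₙ) + ex(2n-5; Tₙ*) < (n² - 5n + 4) + (n² - 6n + 11)`
edges in `G` and `Gᶜ` together, but that sum is exactly `C(2n-5, 2)`.
-/

lemma ncard_edgeSet_le_exNum {p : ℕ} {W : Type*} {L : SimpleGraph W} {G : SimpleGraph (Fin p)}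
    (h : ¬ Contains G L) : G.edgeSet.ncard ≤ exNum p L := by
  refine le_csSup ⟨Nat.card (Sym2 (Fin p)), ?_⟩ ⟨G, h, rfl⟩
  rintro k ⟨G', -, rfl⟩
  rw [← Set.ncard_univ]
  exact Set.ncard_le_ncard (Set.subset_univ _)

lemma ncard_edgeSet_add_ncard_edgeSet_compl {p : ℕ} (G : SimpleGraph (Fin p)) :
    G.edgeSet.ncard + Gᶜ.edgeSet.ncard = p.choose 2 := by
  classical
  have hdisj : Disjoint G.edgeSet Gᶜ.edgeSet := by
    rw [disjoint_edgeSet]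
    exact disjoint_compl_right
  rw [← Set.ncard_union_eq hdisj, ← edgeSet_sup, sup_compl_eq_top, ← coe_edgeFinset,
    Set.ncard_coe_finset, card_edgeFinset_top_eq_card_choose_two, Fintype.card_fin]

section Ramsey

variable {V W : Type*} {G₁ : SimpleGraph V} {G₂ : SimpleGraph W}

lemma contains_or_contains_compl_of_exNum_add_lt {p : ℕ} (h : exNum p G₁ + exNum p G₂ < p.choose 2)
    (G : SimpleGraph (Fin p)) : Contains G G₁ ∨ Contains Gᶜ G₂ := by
  by_contra! hG
  have := ncard_edgeSet_add_ncard_edgeSet_compl G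
  have := ncard_edgeSet_le_exNum hG.1
  have := ncard_edgeSet_le_exNum hG.2
  omega

lemma ramsey_le {p : ℕ} (hp : 0 < p)
    (h : ∀ G : SimpleGraph (Fin p), Contains G G₁ ∨ Contains Gᶜ G₂) : ramsey G₁ G₂ ≤ p :=
  Nat.sInf_le ⟨hp, h⟩

lemma le_ramsey {p N : ℕ} (hp : 0 < p)
    (h : ∀ G : SimpleGraph (Fin p), Contains G G₁ ∨ Contains Gᶜ G₂)
    (hlow : ∀ m, 0 < m → m < N → ∃ G : SimpleGraph (Fin m), ¬ Contains G G₁ ∧ ¬ Contains Gᶜ G₂) :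
    N ≤ ramsey G₁ G₂ := by
  refine le_csInf ⟨p, hp, h⟩ ?_
  rintro m ⟨hm, hmG⟩
  by_contra! hlt
  obtain ⟨G, hG₁, hG₂⟩ := hlow m hm hlt
  exact (hmG G).elim hG₁ hG₂

end Ramsey

def twoCliques (m t : ℕ) : SimpleGraph (Fin m) where
  Adj a b := a ≠ b ∧ (a.val < t ↔ b.val < t)
  symm := ⟨fun _ _ h => ⟨h.1.symm, h.2.symm⟩⟩
  loopless := ⟨fun _ h => h.1 rfl⟩

lemma card_le_of_forall_lt_iff {m t : ℕ} (hm : m ≤ 2 * t) {s : Finset (Fin m)} {b : Prop}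
    (hs : ∀ a ∈ s, (a.val < t ↔ b)) : s.card ≤ t := by
  by_cases hb : b
  · calc s.card ≤ (Finset.range t).card :=
          Finset.card_le_card_of_injOn Fin.val (fun a ha => by simpa [hb] using hs a ha)
            Fin.val_injective.injOn
      _ = t := Finset.card_range t
  · calc s.card ≤ (Finset.Ico t m).card :=
          Finset.card_le_card_of_injOn Fin.val
            (fun a ha => by simpa [hb, a.isLt] using hs a ha) Fin.val_injective.injOn
      _ ≤ t := by rw [Nat.card_Ico]; omega

lemma not_contains_twoCliques {m t : ℕ} (hm : m ≤ 2 * t) {U : Type*} [Fintype U]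
    {H : SimpleGraph U} (hH : H.Connected) (hcard : t < Fintype.card U) :
    ¬ Contains (twoCliques m t) H := by
  rintro ⟨f, hf⟩
  obtain ⟨u₀⟩ := hH.nonempty
  have hside : ∀ u, ((f u).val < t ↔ (f u₀).val < t) := by
    intro u
    obtain ⟨w⟩ := hH.preconnected u u₀
    induction w with
    | nil => rfl
    | cons hadj _ ih => exact (hf _ _ hadj).2.trans ih
  have := card_le_of_forall_lt_iff hm (s := Finset.univ.map f)
    (Finset.forall_mem_map.2 fun u _ => hside u)
  simp only [Finset.card_map, Finset.card_univ] at this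
  omega

lemma Tstar_adj_iff {n : ℕ} {a b : Fin n} :
    (Tstar n).Adj a b ↔ a.val ≠ b.val ∧
      ((a.val = 0 ∧ 1 ≤ b.val ∧ b.val ≤ n - 3) ∨ (b.val = 0 ∧ 1 ≤ a.val ∧ a.val ≤ n - 3) ∨
        (a.val = n - 3 ∧ b.val = n - 2) ∨ (b.val = n - 3 ∧ a.val = n - 2) ∨
        (a.val = n - 2 ∧ b.val = n - 1) ∨ (b.val = n - 2 ∧ a.val = n - 1)) := by
  simp only [Tstar, fromRel_adj, ne_eq, Fin.ext_iff]
  tauto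

lemma not_contains_compl_twoCliques_Tstar {n m : ℕ} (hn : 6 ≤ n) (hm : m ≤ 2 * (n - 3)) :
    ¬ Contains (twoCliques m (n - 3))ᶜ (Tstar n) := by
  rintro ⟨f, hf⟩
  have hswap : ∀ a b, (Tstar n).Adj a b → ((f a).val < n - 3 ↔ ¬ (f b).val < n - 3) := by
    intro a b hab
    have h := hf a b hab
    simp only [compl_adj, twoCliques] at h
    tauto
  let v₀ : Fin n := ⟨0, by omega⟩
  let v₂ : Fin n := ⟨n - 2, by omega⟩
  -- `{v₁, …, v_{n-3}, v_{n-1}}` lies in the class of the bipartition of `Tₙ*` opposite to `v₀`.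
  have hodd : ∀ i ∈ (Finset.univ.erase v₀).erase v₂,
      ((f i).val < n - 3 ↔ ¬ (f v₀).val < n - 3) := by
    rintro ⟨i, hi⟩ hmem
    simp only [Finset.mem_erase, Finset.mem_univ, ne_eq, v₀, v₂, Fin.ext_iff] at hmem
    by_cases hi' : i ≤ n - 3
    · have := hswap v₀ ⟨i, hi⟩ (Tstar_adj_iff.2 (by grind))
      tauto
    · let v₃ : Fin n := ⟨n - 3, by omega⟩
      have h₁ := hswap v₀ v₃ (Tstar_adj_iff.2 (by grind))
      have h₂ := hswap v₃ v₂ (Tstar_adj_iff.2 (by grind))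
      have h₃ := hswap v₂ ⟨i, hi⟩ (Tstar_adj_iff.2 (by grind))
      tauto
  have := card_le_of_forall_lt_iff hm (s := ((Finset.univ.erase v₀).erase v₂).map f)
    (Finset.forall_mem_map.2 hodd)
  rw [Finset.card_map, Finset.card_erase_of_mem (by simp [v₀, v₂, Fin.ext_iff]; omega),
    Finset.card_erase_of_mem (Finset.mem_univ _), Finset.card_univ, Fintype.card_fin] at this
  omega

lemma sq_sub_add_sq_sub_eq_choose {n : ℕ} (hn : 6 ≤ n) :
    (n ^ 2 - 5 * n + 4) + (n ^ 2 - 6 * n + 11) = (2 * n - 5).choose 2 := by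
  obtain ⟨k, rfl⟩ : ∃ k, n = k + 6 := ⟨n - 6, by omega⟩
  rw [show 2 * (k + 6) - 5 = 2 * k + 7 by omega, Nat.choose_two_right,
    show 2 * k + 7 - 1 = 2 * (k + 3) by omega, Nat.mul_left_comm,
    Nat.mul_div_cancel_left _ two_pos, show (k + 6) ^ 2 = k ^ 2 + 12 * k + 36 by ring]
  ring_nf
  omega

theorem stmt7 (n : ℕ) (hn : 6 ≤ n) (Gn : SimpleGraph (Fin n)) (hconn : Gn.Connected)
    (hex : exNum (2 * n - 5) Gn < n ^ 2 - 5 * n + 4)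
    (hexT : exNum (2 * n - 5) (Tstar n) = n ^ 2 - 6 * n + 11) :
    ramsey Gn (Tstar n) = 2 * n - 5 := by
  have hsplit : ∀ G : SimpleGraph (Fin (2 * n - 5)), Contains G Gn ∨ Contains Gᶜ (Tstar n) :=
    contains_or_contains_compl_of_exNum_add_lt
      (by rw [hexT, ← sq_sub_add_sq_sub_eq_choose hn]; omega)
  refine le_antisymm (ramsey_le (by omega) hsplit) (le_ramsey (by omega) hsplit ?_)
  intro m _ hm
  refine ⟨twoCliques m (n - 3), not_contains_twoCliques (by omega) hconn (by simp; omega), ?_⟩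
  exact not_contains_compl_twoCliques_Tstar hn (by omega)
end

section
/- For every integer n ≥ 8, r(T_n*, T_n*) = 2n - 5. -/
open SimpleGraph

/-!
Write `t = n - 3`, so that `2n - 5 = 2t + 1`.

For the lower bound, split `m ≤ 2n - 6` vertices into two cliques of at most `n - 3` vertices.
The tree `Tₙ*` is connected on `n` vertices, so it fits in neither clique; the complement is
complete bipartite with parts of at most `n - 3` vertices, while one colour class of the tree
`Tₙ*` (all vertices but `v₀` and `v_{n-2}`) has `n - 2` vertices.

For the upper bound, the degree sums of a graph on `2t + 1` vertices and of its complement add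
up to `2t(2t + 1)`, so it suffices that a `Tₙ*`-free graph has degree sum below `t(2t + 1)`.
Let `c` have maximum degree. A path `c s x u` together with `t - 1` further neighbours of `c`
is a copy of `Tₙ*`; forbidding it confines the neighbourhood of a vertex `x ≠ c` adjacent to
some `s ∈ N(c)` to `{c, s}` if `deg c ≥ t + 2`, and, when `x ∉ N(c)`, to `{s}` if
`deg c = t + 1` and to `N(c)` if `deg c = t`. Counting degrees inside and outside the closed
neighbourhood of `c` settles the first two cases. If all degrees are at most `t`, one vertex of
degree `< t` suffices; otherwise the graph is `t`-regular, every vertex outside `N[c]` has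
neighbourhood exactly `N(c)`, and a vertex of `N(c)` would have degree `t + 1`.
-/

open Finset

theorem contains_fromRel {V W : Type*} {G : SimpleGraph V} {r : W → W → Prop} (f : W ↪ V)
    (hf : ∀ a b, a ≠ b → r a b → G.Adj (f a) (f b)) : Contains G (SimpleGraph.fromRel r) :=
  ⟨f, fun a b hab => hab.2.elim (hf a b hab.1) fun h => (hf b a hab.1.symm h).symm⟩

section TstarStructure

variable {n : ℕ} (hn : 4 ≤ n)
include hn

theorem tstar_adj {a b : Fin n}
    (h : (a.val = 0 ∧ 1 ≤ b.val ∧ b.val ≤ n - 3) ∨ (a.val = n - 3 ∧ b.val = n - 2) ∨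
      (a.val = n - 2 ∧ b.val = n - 1)) : (Tstar n).Adj a b :=
  (fromRel_adj _ a b).2 ⟨fun hab => by subst hab; omega, Or.inl h⟩

theorem tstar_iff_of_forall_adj_iff (p : Fin n → Prop)
    (hp : ∀ a b, (Tstar n).Adj a b → (p a ↔ p b)) (i : Fin n) :
    p i ↔ p ⟨0, by omega⟩ := by
  have hleaf : ∀ j : Fin n, 1 ≤ j.val → j.val ≤ n - 3 → (p j ↔ p ⟨0, by omega⟩) :=
    fun j hj1 hj2 => (hp _ _ (tstar_adj hn (Or.inl ⟨rfl, hj1, hj2⟩))).symm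
  have hsx := hp ⟨n - 3, by omega⟩ ⟨n - 2, by omega⟩
    (tstar_adj hn (Or.inr (Or.inl ⟨rfl, rfl⟩)))
  have hxy := hp ⟨n - 2, by omega⟩ ⟨n - 1, by omega⟩
    (tstar_adj hn (Or.inr (Or.inr ⟨rfl, rfl⟩)))
  have hs := hleaf ⟨n - 3, by omega⟩ (by simp; omega) (by simp)
  obtain ⟨i, hi⟩ := i
  rcases (by omega : i = 0 ∨ (1 ≤ i ∧ i ≤ n - 3) ∨ i = n - 2 ∨ i = n - 1)
    with rfl | hi' | rfl | rfl
  · rfl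
  · exact hleaf _ hi'.1 hi'.2
  · exact hsx.symm.trans hs
  · exact hxy.symm.trans (hsx.symm.trans hs)

theorem tstar_iff_not_of_forall_adj_not_iff (p : Fin n → Prop)
    (hp : ∀ a b, (Tstar n).Adj a b → ¬(p a ↔ p b)) (i : Fin n) (hi0 : i.val ≠ 0)
    (hi : i.val ≠ n - 2) : p i ↔ ¬ p ⟨0, by omega⟩ := by
  have hleaf : ∀ j : Fin n, 1 ≤ j.val → j.val ≤ n - 3 → ¬(p ⟨0, by omega⟩ ↔ p j) :=
    fun j hj1 hj2 => hp _ _ (tstar_adj hn (Or.inl ⟨rfl, hj1, hj2⟩))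
  have hsx := hp ⟨n - 3, by omega⟩ ⟨n - 2, by omega⟩
    (tstar_adj hn (Or.inr (Or.inl ⟨rfl, rfl⟩)))
  have hxy := hp ⟨n - 2, by omega⟩ ⟨n - 1, by omega⟩
    (tstar_adj hn (Or.inr (Or.inr ⟨rfl, rfl⟩)))
  have hs := hleaf ⟨n - 3, by omega⟩ (by simp; omega) (by simp)
  obtain ⟨i, hin⟩ := i
  simp only at hi0 hi
  rcases (by omega : (1 ≤ i ∧ i ≤ n - 3) ∨ i = n - 1) with hi' | rfl
  · have := hleaf ⟨i, hin⟩ hi'.1 hi'.2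
    tauto
  · tauto

end TstarStructure

variable {V : Type*} [Fintype V] [DecidableEq V]

theorem not_contains_tstar_of_forall_adj_mem_iff {G : SimpleGraph V} {n : ℕ} (hn : 4 ≤ n)
    (S : Finset V) (hG : ∀ a b, G.Adj a b → (a ∈ S ↔ b ∈ S)) (hS : #S < n)
    (hSc : #Sᶜ < n) :
    ¬ Contains G (Tstar n) := by
  rintro ⟨f, hf⟩
  have hside := tstar_iff_of_forall_adj_iff hn (fun i => f i ∈ S)
    fun a b h => hG _ _ (hf a b h)
  by_cases h0 : f ⟨0, by omega⟩ ∈ S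
  · have := card_le_card_of_injOn f (s := univ) (fun i _ => (hside i).2 h0) f.injective.injOn
    simp only [card_univ, Fintype.card_fin] at this
    omega
  · have := card_le_card_of_injOn f (s := univ) (t := Sᶜ)
      (fun i _ => mem_compl.2 fun h => h0 ((hside i).1 h)) f.injective.injOn
    simp only [card_univ, Fintype.card_fin] at this
    omega

theorem not_contains_tstar_of_forall_adj_not_mem_iff {G : SimpleGraph V} {n : ℕ} (hn : 4 ≤ n)
    (S : Finset V) (hG : ∀ a b, G.Adj a b → ¬(a ∈ S ↔ b ∈ S)) (hS : #S + 3 ≤ n)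
    (hSc : #Sᶜ + 3 ≤ n) :
    ¬ Contains G (Tstar n) := by
  rintro ⟨f, hf⟩
  have hside := tstar_iff_not_of_forall_adj_not_iff hn (fun i => f i ∈ S)
    fun a b h => hG _ _ (hf a b h)
  set U : Finset (Fin n) := univ \ {⟨0, by omega⟩, ⟨n - 2, by omega⟩}
  have hU : #U = n - 2 := by
    rw [card_univ_sdiff, card_pair (by simp [Fin.ext_iff]; omega), Fintype.card_fin]
  have hmem : ∀ i ∈ U, f i ∈ S ↔ f ⟨0, by omega⟩ ∉ S := fun i hi => by
    simp only [U, mem_sdiff, mem_univ, mem_insert, mem_singleton, Fin.ext_iff, true_and,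
      not_or] at hi
    exact hside i hi.1 hi.2
  by_cases h0 : f ⟨0, by omega⟩ ∈ S
  · have := card_le_card_of_injOn f (t := Sᶜ)
      (fun i hi => mem_compl.2 fun h => ((hmem i hi).1 h) h0) f.injective.injOn
    omega
  · have := card_le_card_of_injOn f (t := S) (fun i hi => (hmem i hi).2 h0) f.injective.injOn
    omega

theorem exists_not_contains_tstar_and_compl {n m : ℕ} (hn : 4 ≤ n) (hm : m + 6 ≤ 2 * n) :
    ∃ H : SimpleGraph (Fin m), ¬ Contains H (Tstar n) ∧ ¬ Contains Hᶜ (Tstar n) := by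
  set S : Finset (Fin m) := {i | i < n - 3}
  have hS : #S = min m (n - 3) := Fin.card_filter_val_lt
  have hSc : #Sᶜ = m - min m (n - 3) := by rw [card_compl, hS, Fintype.card_fin]
  refine ⟨SimpleGraph.fromRel fun a b => (a ∈ S ↔ b ∈ S), ?_, ?_⟩
  · refine not_contains_tstar_of_forall_adj_mem_iff hn S (fun a b h => ?_) (by omega) (by omega)
    rw [fromRel_adj] at h
    tauto
  · refine not_contains_tstar_of_forall_adj_not_mem_iff hn S (fun a b h => ?_) (by omega)
      (by omega)
    rw [compl_adj, fromRel_adj] at h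
    tauto

section UpperBound

variable {G : SimpleGraph V} [DecidableRel G.Adj]

theorem contains_tstar_of_path {n : ℕ} (hn : 4 ≤ n) {w s x y : V} (hws : G.Adj w s)
    (hsx : G.Adj s x) (hxy : G.Adj x y) (hwx : w ≠ x) (hwy : w ≠ y) (hsy : s ≠ y)
    (hleaves : n - 4 ≤ #(G.neighborFinset w \ {s, x, y})) : Contains G (Tstar n) := by
  obtain ⟨k, rfl⟩ : ∃ k, n = k + 4 := ⟨n - 4, by omega⟩
  set D := G.neighborFinset w \ {s, x, y}
  let g : Fin k → V := fun i => D.equivFin.symm (Fin.castLE (by omega) i)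
  have hgD : ∀ i, g i ∈ D := fun i => (D.equivFin.symm _).2
  have hg : Function.Injective g := fun i j h => by
    simpa [g, Fin.castLE_inj] using Subtype.ext h
  have hgw : ∀ i, G.Adj w (g i) := fun i => by
    simpa using (mem_sdiff.1 (hgD i)).1
  have hgsxy : ∀ i, g i ≠ s ∧ g i ≠ x ∧ g i ≠ y := fun i => by
    simpa using (mem_sdiff.1 (hgD i)).2
  let f : Fin (k + 4) → V := Fin.cons w (Fin.append g ![s, x, y])
  have hf : Function.Injective f := by
    refine Fin.cons_injective_iff.2 ⟨?_, Fin.append_injective_iff.2 ⟨hg, ?_, ?_⟩⟩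
    · rintro ⟨i, hi⟩
      induction i using Fin.addCases with
      | left i =>
        rw [Fin.append_left] at hi
        exact G.irrefl (hi ▸ hgw i)
      | right i => fin_cases i <;> simp_all
    · intro i j hij
      fin_cases i <;> fin_cases j <;> simp_all [G.ne_of_adj hsx, G.ne_of_adj hxy]
    · intro i j
      fin_cases j <;> simp [hgsxy i]
  refine contains_fromRel ⟨f, hf⟩ ?_
  rintro a b - (⟨ha, hb1, hb2⟩ | ⟨ha, hb⟩ | ⟨ha, hb⟩)
  · obtain rfl : a = 0 := Fin.ext ha
    obtain ⟨j, rfl⟩ : ∃ j : Fin (k + 3), b = j.succ :=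
      ⟨⟨b - 1, by omega⟩, Fin.ext (by simp; omega)⟩
    induction j using Fin.addCases with
    | left i => simpa [f] using hgw i
    | right i =>
      obtain rfl : i = 0 := Fin.ext (by simp at hb2; omega)
      simpa [f] using hws
  · obtain rfl : a = (Fin.natAdd k (0 : Fin 3)).succ := Fin.ext (by simp; omega)
    obtain rfl : b = (Fin.natAdd k (1 : Fin 3)).succ := Fin.ext (by simp; omega)
    simpa [f] using hsx
  · obtain rfl : a = (Fin.natAdd k (1 : Fin 3)).succ := Fin.ext (by simp; omega)
    obtain rfl : b = (Fin.natAdd k (2 : Fin 3)).succ := Fin.ext (by simp; omega)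
    simpa [f] using hxy

theorem degree_add_degree_le_card {v c : V} (h : ∀ s, G.Adj c s → ¬ G.Adj s v) :
    G.degree v + G.degree c ≤ Fintype.card V := by
  have hdisj : Disjoint (G.neighborFinset v) (G.neighborFinset c) :=
    disjoint_left.2 fun s hv hc => h s (by simpa using hc) (by simpa [adj_comm] using hv)
  rw [← card_neighborFinset_eq_degree, ← card_neighborFinset_eq_degree,
    ← card_union_of_disjoint hdisj]
  exact card_le_univ _

theorem degree_add_degree_add_two_le_card {v c : V} (hvc : v ≠ c) (hcv : ¬ G.Adj c v)
    (h : ∀ s, G.Adj c s → ¬ G.Adj s v) : G.degree v + G.degree c + 2 ≤ Fintype.card V := by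
  have hdisj : Disjoint (G.neighborFinset v) (G.neighborFinset c) :=
    disjoint_left.2 fun s hv hc => h s (by simpa using hc) (by simpa [adj_comm] using hv)
  have hv : v ∉ G.neighborFinset v ∪ G.neighborFinset c := by simp [hcv]
  have hc : c ∉ insert v (G.neighborFinset v ∪ G.neighborFinset c) := by
    simpa [hvc.symm] using fun h => hcv h.symm
  have := card_le_univ (insert c (insert v (G.neighborFinset v ∪ G.neighborFinset c)))
  rwa [card_insert_of_notMem hc, card_insert_of_notMem hv, card_union_of_disjoint hdisj,
    card_neighborFinset_eq_degree, card_neighborFinset_eq_degree] at this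

section Turan

variable {t : ℕ} (hT : ¬ Contains G (Tstar (t + 3)))
include hT

theorem degree_add_two_le_of_path (ht : 1 ≤ t) {c s x u : V} (hcs : G.Adj c s)
    (hsx : G.Adj s x) (hxu : G.Adj x u) (hcx : c ≠ x) (hcu : c ≠ u) (hsu : s ≠ u) :
    G.degree c + 2 ≤ t + #(G.neighborFinset c ∩ {s, x, u}) := by
  by_contra! h
  refine hT (contains_tstar_of_path (by omega) hcs hsx hxu hcx hcu hsu ?_)
  have := card_sdiff_add_card_inter (G.neighborFinset c) {s, x, u}
  rw [card_neighborFinset_eq_degree] at this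
  omega

theorem neighborFinset_subset_pair (ht : 1 ≤ t) {c s x : V} (hc : t + 2 ≤ G.degree c)
    (hcs : G.Adj c s) (hsx : G.Adj s x) (hcx : c ≠ x) : G.neighborFinset x ⊆ {c, s} := by
  intro u hu
  rw [mem_neighborFinset] at hu
  by_contra hu'
  simp only [mem_insert, mem_singleton, not_or] at hu'
  have := degree_add_two_le_of_path hT ht hcs hsx hu hcx (Ne.symm hu'.1) (Ne.symm hu'.2)
  have : #(G.neighborFinset c ∩ {s, x, u}) ≤ 3 :=
    (card_le_card inter_subset_right).trans card_le_three
  omega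

theorem neighborFinset_subset_singleton (ht : 1 ≤ t) {c s x : V} (hc : t + 1 ≤ G.degree c)
    (hcs : G.Adj c s) (hsx : G.Adj s x) (hcx : c ≠ x) (hx : ¬ G.Adj c x) :
    G.neighborFinset x ⊆ {s} := by
  intro u hu
  rw [mem_neighborFinset] at hu
  by_contra hus
  rw [mem_singleton] at hus
  have hcu : c ≠ u := by rintro rfl; exact hx hu.symm
  have := degree_add_two_le_of_path hT ht hcs hsx hu hcx hcu (Ne.symm hus)
  have hsub : G.neighborFinset c ∩ {s, x, u} ⊆ {s, u} := by
    intro z hz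
    simp only [mem_inter, mem_neighborFinset, mem_insert, mem_singleton] at hz ⊢
    grind
  have := (card_le_card hsub).trans card_le_two
  omega

theorem neighborFinset_subset_neighborFinset (ht : 1 ≤ t) {c s x : V} (hc : t ≤ G.degree c)
    (hcs : G.Adj c s) (hsx : G.Adj s x) (hcx : c ≠ x) (hx : ¬ G.Adj c x) :
    G.neighborFinset x ⊆ G.neighborFinset c := by
  intro u hu
  rw [mem_neighborFinset] at hu
  by_contra hcu
  rw [mem_neighborFinset] at hcu
  have hcu' : c ≠ u := by rintro rfl; exact hx hu.symm
  have hsu : s ≠ u := by rintro rfl; exact hcu hcs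
  have := degree_add_two_le_of_path hT ht hcs hsx hu hcx hcu' hsu
  have hsub : G.neighborFinset c ∩ {s, x, u} ⊆ {s} := by
    intro z hz
    simp only [mem_inter, mem_neighborFinset, mem_insert, mem_singleton] at hz ⊢
    grind
  have := (card_le_card hsub).trans_eq (card_singleton s)
  omega

theorem exists_degree_lt_of_forall_degree_le (ht : 1 ≤ t) (hV : Fintype.card V = 2 * t + 1)
    (hmax : ∀ v, G.degree v ≤ t) : ∃ v, G.degree v < t := by
  by_contra! hmin
  have hdeg : ∀ v, G.degree v = t := fun v => le_antisymm (hmax v) (hmin v)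
  obtain ⟨c⟩ : Nonempty V := Fintype.card_pos_iff.1 (by omega)
  set B := (insert c (G.neighborFinset c))ᶜ
  have hcB : c ∉ B := by simp [B]
  have hBcard : #B = t := by
    rw [card_compl, card_insert_of_notMem (by simp), card_neighborFinset_eq_degree, hdeg]
    omega
  have hB : ∀ b ∈ B, G.neighborFinset c ⊆ G.neighborFinset b := by
    intro b hb
    simp only [B, mem_compl, mem_insert, mem_neighborFinset, not_or] at hb
    by_cases h : ∃ s, G.Adj c s ∧ G.Adj s b
    · obtain ⟨s, hcs, hsb⟩ := h
      have hsub := neighborFinset_subset_neighborFinset hT ht (hdeg c).ge hcs hsb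
        (Ne.symm hb.1) hb.2
      refine (eq_of_subset_of_card_le hsub ?_).symm.subset
      simp [hdeg]
    · push Not at h
      have := degree_add_degree_add_two_le_card hb.1 hb.2 h
      grind
  obtain ⟨a, ha⟩ : (G.neighborFinset c).Nonempty := by
    rw [← card_pos, card_neighborFinset_eq_degree, hdeg]
    omega
  have hsub : insert c B ⊆ G.neighborFinset a := by
    intro u hu
    rcases mem_insert.1 hu with rfl | hu
    · simpa [adj_comm] using ha
    · simpa [adj_comm] using hB u hu ha
  have := card_le_card hsub
  rw [card_insert_of_notMem hcB, hBcard, card_neighborFinset_eq_degree, hdeg] at this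
  omega

theorem sum_degree_le_of_degree_eq_succ (ht : 3 ≤ t) (hV : Fintype.card V = 2 * t + 1)
    (hmax : ∀ v, G.degree v ≤ t + 1) {c : V} (hc : G.degree c = t + 1) :
    ∑ v, G.degree v ≤ 2 * t ^ 2 + 4 := by
  set A := insert c (G.neighborFinset c)
  have hAcard : #A = t + 2 := by
    rw [card_insert_of_notMem (by simp), card_neighborFinset_eq_degree, hc]
  have hout : ∀ v ∈ Aᶜ, G.degree v ≤ t - 2 := by
    intro v hv
    simp only [A, mem_compl, mem_insert, mem_neighborFinset, not_or] at hv
    by_cases h : ∃ s, G.Adj c s ∧ G.Adj s v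
    · obtain ⟨s, hcs, hsv⟩ := h
      have := card_le_card (neighborFinset_subset_singleton hT (by omega) hc.ge hcs hsv
        (Ne.symm hv.1) hv.2)
      rw [card_neighborFinset_eq_degree, card_singleton] at this
      omega
    · push Not at h
      have := degree_add_degree_add_two_le_card hv.1 hv.2 h
      omega
  calc ∑ v, G.degree v = ∑ v ∈ A, G.degree v + ∑ v ∈ Aᶜ, G.degree v :=
        (sum_add_sum_compl A _).symm
    _ ≤ #A • (t + 1) + #Aᶜ • (t - 2) :=
        add_le_add (sum_le_card_nsmul _ _ _ fun v _ => hmax v) (sum_le_card_nsmul _ _ _ hout)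
    _ = 2 * t ^ 2 + 4 := by
        rw [card_compl, hAcard, hV, smul_eq_mul, smul_eq_mul]
        obtain ⟨u, rfl⟩ := Nat.exists_eq_add_of_le ht
        simp only [show 2 * (3 + u) + 1 - (3 + u + 2) = u + 2 by omega,
          show 3 + u - 2 = u + 1 by omega]
        ring

theorem sum_degree_le_of_add_two_le_degree (ht : 3 ≤ t) (hV : Fintype.card V = 2 * t + 1)
    {c : V} (hc : t + 2 ≤ G.degree c) : ∑ v, G.degree v ≤ 2 * t ^ 2 := by
  have hother : ∀ v ∈ univ.erase c, G.degree v ≤ t - 1 := by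
    intro v hv
    by_cases h : ∃ s, G.Adj c s ∧ G.Adj s v
    · obtain ⟨s, hcs, hsv⟩ := h
      have := card_le_card (neighborFinset_subset_pair hT (by omega) hc hcs hsv
        (Ne.symm (ne_of_mem_erase hv)))
      rw [card_neighborFinset_eq_degree] at this
      have := card_le_two (a := c) (b := s)
      omega
    · push Not at h
      have := degree_add_degree_le_card h
      omega
  have hc' := G.degree_lt_card_verts c
  calc ∑ v, G.degree v = G.degree c + ∑ v ∈ univ.erase c, G.degree v :=
        (add_sum_erase _ _ (mem_univ c)).symm
    _ ≤ 2 * t + #(univ.erase c) • (t - 1) :=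
        add_le_add (by omega) (sum_le_card_nsmul _ _ _ hother)
    _ = 2 * t ^ 2 := by
        rw [card_erase_of_mem (mem_univ c), card_univ, hV, smul_eq_mul]
        obtain ⟨u, rfl⟩ := Nat.exists_eq_add_of_le ht
        simp only [show 2 * (3 + u) + 1 - 1 = 2 * (3 + u) by omega,
          show 3 + u - 1 = u + 2 by omega]
        ring

theorem sum_degree_lt (ht : 5 ≤ t) (hV : Fintype.card V = 2 * t + 1) :
    ∑ v, G.degree v < t * (2 * t + 1) := by
  have : Nonempty V := Fintype.card_pos_iff.1 (by omega)
  obtain ⟨c, hc⟩ := G.exists_maximal_degree_vertex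
  have hmax : ∀ v, G.degree v ≤ G.degree c := hc ▸ G.degree_le_maxDegree
  rcases (by omega : G.degree c ≤ t ∨ G.degree c = t + 1 ∨ t + 2 ≤ G.degree c)
    with hle | heq | hge
  · obtain ⟨v, hv⟩ := exists_degree_lt_of_forall_degree_le hT (by omega) hV
      fun v => (hmax v).trans hle
    calc ∑ v, G.degree v < ∑ _v : V, t :=
          sum_lt_sum (fun v _ => (hmax v).trans hle) ⟨v, mem_univ v, hv⟩
      _ = t * (2 * t + 1) := by simp [hV, mul_comm]
  · have := sum_degree_le_of_degree_eq_succ hT (by omega) hV (heq ▸ hmax) heq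
    nlinarith
  · have := sum_degree_le_of_add_two_le_degree hT (by omega) hV hge
    nlinarith

end Turan

end UpperBound

theorem contains_tstar_or_compl {t : ℕ} (ht : 5 ≤ t) (hV : Fintype.card V = 2 * t + 1)
    (G : SimpleGraph V) : Contains G (Tstar (t + 3)) ∨ Contains Gᶜ (Tstar (t + 3)) := by
  classical
  by_contra! h
  have hG := sum_degree_lt h.1 ht hV
  have hGc := sum_degree_lt h.2 ht hV
  have hcompl : ∀ v, G.degree v + Gᶜ.degree v = 2 * t := fun v => by
    have := G.degree_lt_card_verts v
    rw [degree_compl, hV] at *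
    omega
  have hsum : ∑ v, G.degree v + ∑ v, Gᶜ.degree v = 2 * t * (2 * t + 1) := by
    rw [← sum_add_distrib, sum_congr rfl fun v _ => hcompl v, sum_const, card_univ, hV,
      smul_eq_mul, mul_comm]
  nlinarith

theorem stmt8 (n : ℕ) (hn : 8 ≤ n) :
    ramsey (Tstar n) (Tstar n) = 2 * n - 5 := by
  refine IsLeast.csInf_eq ⟨⟨by omega, fun G => ?_⟩, fun N ⟨_, hN⟩ => ?_⟩
  · obtain ⟨t, rfl⟩ : ∃ t, n = t + 3 := ⟨n - 3, by omega⟩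
    exact contains_tstar_or_compl (by omega) (by simp; omega) G
  · by_contra! hlt
    obtain ⟨H, hH, hHc⟩ :=
      exists_not_contains_tstar_and_compl (n := n) (m := N) (by omega) (by omega)
    exact (hN H).elim hH hHc
end

section
/- Let m, n be positive integers with n > m ≥ 7 and (m-1) ∤ (n-3). Then r(K_{1,m-1}, T_n*) = m+n-4. -/
open SimpleGraph

/-!
Upper bound. The complement `H` of a `K_{1,m-1}`-free graph on `m + n - 4` vertices has minimum
degree at least `n - 3`. A copy of `T_n*` is a path `v u w x` together with `n - 4` further
neighbours of `v`. If `H` has none, it is `(n - 3)`-regular and any two vertices at distance two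
have the same neighbourhood. A vertex, its neighbours and its twins then form a set closed under
adjacency, hence everything, so every twin class has `m - 1` elements and `m - 1 ∣ m + n - 4`.

Lower bound. Join a `2h`-regular circulant graph on `q` vertices with `r` independent vertices,
where `q + r = m + n - 5` and the parameters depend on the parity of `n - m`, so that every
degree is `n - 4` or `n - 3`. A vertex of degree `n - 3` has the same neighbourhood as each of its
non-neighbours, which rules out `T_n*`, and the complement has maximum degree at most `m - 2`.
-/

open Finset

theorem Contains.trans {U V W : Type*} {G : SimpleGraph U} {H : SimpleGraph V}
    {L : SimpleGraph W} (hGH : Contains G H) (hHL : Contains H L) : Contains G L := by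
  obtain ⟨f, hf⟩ := hGH
  obtain ⟨g, hg⟩ := hHL
  exact ⟨g.trans f, fun a b h => hf _ _ (hg a b h)⟩

theorem ramsey_eq_of_witness {V W X : Type*} [Fintype X] {G₁ : SimpleGraph V}
    {G₂ : SimpleGraph W} {N : ℕ} (hN : ∀ G : SimpleGraph (Fin N), Contains G G₁ ∨ Contains Gᶜ G₂)
    (K : SimpleGraph X) (hK : Fintype.card X + 1 = N) (hK₁ : ¬Contains K G₁)
    (hK₂ : ¬Contains Kᶜ G₂) : ramsey G₁ G₂ = N := by
  refine le_antisymm (Nat.sInf_le ⟨by omega, hN⟩) (le_csInf ⟨N, by omega, hN⟩ ?_)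
  rintro M ⟨-, hM⟩
  by_contra! hMN
  obtain ⟨e⟩ : Nonempty (Fin M ↪ X) :=
    Function.Embedding.nonempty_of_card_le (by rw [Fintype.card_fin]; omega)
  rcases hM (K.comap e) with h | h
  · exact hK₁ (Contains.trans ⟨e, fun a b hab => hab⟩ h)
  · refine hK₂ (Contains.trans ⟨e, fun a b hab => ?_⟩ h)
    rw [compl_adj] at hab ⊢
    exact ⟨e.injective.ne hab.1, hab.2⟩

theorem exists_injective_mem_of_le_card {V : Type*} {s : Finset V} {k : ℕ} (hk : k ≤ #s) :
    ∃ g : Fin k → V, Function.Injective g ∧ ∀ i, g i ∈ s := by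
  obtain ⟨t, hts, rfl⟩ := exists_subset_card_eq hk
  exact ⟨fun i => (t.equivFin.symm i : V), Subtype.val_injective.comp t.equivFin.symm.injective,
    fun i => hts (t.equivFin.symm i).2⟩

section FiniteGraph

variable {V : Type*} [Fintype V] {G : SimpleGraph V} [DecidableRel G.Adj]

theorem exists_adj_notMem_of_card_lt {v : V} (s : Finset V) (hs : #s < G.degree v) :
    ∃ x, G.Adj v x ∧ x ∉ s := by
  rw [← card_neighborFinset_eq_degree] at hs
  obtain ⟨x, hx, hxs⟩ := exists_mem_notMem_of_card_lt_card hs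
  exact ⟨x, (G.mem_neighborFinset v x).1 hx, hxs⟩

theorem contains_starGraph_iff {m : ℕ} (hm : 1 ≤ m) :
    Contains G (_root_.starGraph m) ↔ ∃ v, m - 1 ≤ G.degree v := by
  constructor
  · rintro ⟨f, hf⟩
    refine ⟨f ⟨0, hm⟩, ?_⟩
    rw [← card_neighborFinset_eq_degree]
    calc m - 1 = #((univ.erase ⟨0, hm⟩).map f) := by simp
      _ ≤ _ := card_le_card fun x hx => by
        obtain ⟨i, hi, rfl⟩ := mem_map.1 hx
        refine (G.mem_neighborFinset _ _).2 (hf _ _ ?_)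
        simpa [_root_.starGraph, SimpleGraph.fromRel_adj, eq_comm, Fin.ext_iff] using hi
  · rintro ⟨v, hv⟩
    obtain ⟨k, rfl⟩ : ∃ k, m = k + 1 := ⟨m - 1, by omega⟩
    obtain ⟨g, hg, hgv⟩ := exists_injective_mem_of_le_card (s := G.neighborFinset v) (k := k)
      (by simpa using hv)
    have hgv' : ∀ i, G.Adj v (g i) := fun i => (G.mem_neighborFinset _ _).1 (hgv i)
    refine ⟨⟨Fin.cons v g, Fin.cons_injective_iff.2 ⟨?_, hg⟩⟩, ?_⟩
    · rintro ⟨i, hi⟩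
      exact (hgv' i).ne hi.symm
    · intro a b hab
      rw [_root_.starGraph, SimpleGraph.fromRel_adj] at hab
      obtain ⟨hne, h | h⟩ := hab
      · obtain rfl : a = 0 := Fin.ext h
        obtain ⟨b, rfl⟩ := Fin.exists_succ_eq.2 hne.symm
        exact hgv' b
      · obtain rfl : b = 0 := Fin.ext h
        obtain ⟨a, rfl⟩ := Fin.exists_succ_eq.2 hne
        exact (hgv' a).symm

variable [DecidableEq V]

theorem eq_univ_of_closed {S : Finset V} (hS : ∀ s ∈ S, ∀ t, G.Adj s t → t ∈ S) {d : ℕ}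
    (hδ : ∀ v, d ≤ G.degree v) (hcard : Fintype.card V ≤ #S + d) : S = univ := by
  by_contra hne
  obtain ⟨z, -, hz⟩ := exists_mem_notMem_of_card_lt_card ((card_lt_iff_ne_univ _).2 hne)
  have hsub : insert z (G.neighborFinset z) ⊆ Sᶜ := by
    intro t ht
    rw [mem_insert] at ht
    rcases ht with rfl | ht
    · exact mem_compl.2 hz
    · exact mem_compl.2 fun htS => hz (hS t htS z ((G.mem_neighborFinset _ _).1 ht).symm)
  have := card_le_card hsub
  rw [card_insert_of_notMem (by simp), card_neighborFinset_eq_degree, card_compl] at this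
  have := hδ z
  have := S.card_le_univ
  omega

variable {n : ℕ}

theorem contains_tstar_of_adj (hn : 4 ≤ n) {v u w x : V} (hvu : G.Adj v u) (huw : G.Adj u w)
    (hwx : G.Adj w x) (hvw : v ≠ w) (hvx : v ≠ x) (hux : u ≠ x)
    (hcard : n - 4 ≤ #(G.neighborFinset v \ {u, w, x})) : Contains G (Tstar n) := by
  obtain ⟨k, rfl⟩ : ∃ k, n = k + 4 := ⟨n - 4, by omega⟩
  rw [Nat.add_sub_cancel] at hcard
  obtain ⟨g, hg, hgv⟩ := exists_injective_mem_of_le_card hcard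
  simp only [mem_sdiff, mem_neighborFinset, mem_insert, mem_singleton, not_or] at hgv
  let f : Fin (k + 4) → V := Fin.cons v (Fin.append g ![u, w, x])
  have hf : Function.Injective f := by
    refine Fin.cons_injective_iff.2 ⟨?_, Fin.append_injective_iff.2 ⟨hg, ?_, ?_⟩⟩
    · rintro ⟨i, hi⟩
      revert hi
      refine Fin.addCases (fun i => ?_) (fun i => ?_) i
      · simpa using fun h => (hgv i).1.ne h.symm
      · fin_cases i <;> simp [hvu.ne.symm, hvw.symm, hvx.symm]
    · intro i j h
      fin_cases i <;> fin_cases j <;> simp_all [huw.ne, hwx.ne]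
    · intro i j
      fin_cases j <;> simp [(hgv i).2.1, (hgv i).2.2.1, (hgv i).2.2.2]
  have hv : ∀ b : Fin (k + 3), b.val ≤ k → G.Adj v (Fin.append g ![u, w, x] b) := by
    intro b
    refine Fin.addCases (fun i _ => ?_) (fun j hj => ?_) b
    · simpa using (hgv i).1
    · obtain rfl : j = 0 := Fin.ext (by simp at hj; omega)
      simpa using hvu
  have hrel : ∀ a b : Fin (k + 4), ((a.val = 0 ∧ 1 ≤ b.val ∧ b.val ≤ k + 4 - 3) ∨
      (a.val = k + 4 - 3 ∧ b.val = k + 4 - 2) ∨ (a.val = k + 4 - 2 ∧ b.val = k + 4 - 1)) →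
      G.Adj (f a) (f b) := by
    rintro a b (⟨ha, hb1, hb2⟩ | ⟨ha, hb⟩ | ⟨ha, hb⟩)
    · obtain rfl : a = 0 := Fin.ext ha
      obtain ⟨b, rfl⟩ := Fin.exists_succ_eq.2 (show b ≠ 0 by rintro rfl; simp at hb1)
      exact hv b (by simp at hb2; omega)
    · obtain rfl : a = (Fin.natAdd k 0 : Fin (k + 3)).succ := Fin.ext (by simp; omega)
      obtain rfl : b = (Fin.natAdd k 1 : Fin (k + 3)).succ := Fin.ext (by simp; omega)
      simpa [f] using huw
    · obtain rfl : a = (Fin.natAdd k 1 : Fin (k + 3)).succ := Fin.ext (by simp; omega)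
      obtain rfl : b = (Fin.natAdd k 2 : Fin (k + 3)).succ := Fin.ext (by simp; omega)
      simpa [f] using hwx
  refine ⟨⟨f, hf⟩, fun a b hab => ?_⟩
  rw [Tstar, SimpleGraph.fromRel_adj] at hab
  obtain ⟨-, hab | hab⟩ := hab
  · exact hrel a b hab
  · exact (hrel b a hab).symm

theorem exists_adj_of_contains_tstar (hn : 4 ≤ n) (h : Contains G (Tstar n)) :
    ∃ v u w x, G.Adj v u ∧ G.Adj u w ∧ G.Adj w x ∧ v ≠ w ∧ v ≠ x ∧ u ≠ x ∧
      n - 4 ≤ #(G.neighborFinset v \ {u, w, x}) := by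
  obtain ⟨k, rfl⟩ : ∃ k, n = k + 4 := ⟨n - 4, by omega⟩
  obtain ⟨f, hf⟩ := h
  have hadj : ∀ a b : Fin (k + 4), a ≠ b → ((a.val = 0 ∧ 1 ≤ b.val ∧ b.val ≤ k + 1) ∨
      (a.val = k + 1 ∧ b.val = k + 2) ∨ (a.val = k + 2 ∧ b.val = k + 3)) →
      G.Adj (f a) (f b) :=
    fun a b hne h => hf a b ((SimpleGraph.fromRel_adj _ _ _).2 ⟨hne, Or.inl (by omega)⟩)
  have hne : ∀ i j : ℕ, (hi : i < k + 4) → (hj : j < k + 4) → i ≠ j →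
      f ⟨i, hi⟩ ≠ f ⟨j, hj⟩ := fun i j hi hj h => f.injective.ne (by simpa [Fin.ext_iff] using h)
  refine ⟨f ⟨0, by omega⟩, f ⟨k + 1, by omega⟩, f ⟨k + 2, by omega⟩, f ⟨k + 3, by omega⟩,
    hadj _ _ (by simp [Fin.ext_iff]) (by simp), hadj _ _ (by simp [Fin.ext_iff]) (by simp),
    hadj _ _ (by simp [Fin.ext_iff]) (by simp), hne _ _ _ _ (by omega), hne _ _ _ _ (by omega),
    hne _ _ _ _ (by omega), ?_⟩
  calc k + 4 - 4 = #((Icc (⟨1, by omega⟩ : Fin (k + 4)) ⟨k, by omega⟩).map f) := by simp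
    _ ≤ _ := card_le_card fun y hy => by
      obtain ⟨⟨i, hi⟩, hik, rfl⟩ := mem_map.1 hy
      simp only [mem_Icc, Fin.mk_le_mk] at hik
      simp only [mem_sdiff, mem_neighborFinset, mem_insert, mem_singleton]
      exact ⟨hadj _ _ (by simp [Fin.ext_iff]; omega) (by simp; omega),
        by simp only [EmbeddingLike.apply_eq_iff_eq, Fin.mk.injEq]; omega⟩

theorem not_contains_tstar_of_twins (hn : 5 ≤ n) (hΔ : ∀ v, G.degree v ≤ n - 3)
    (htwin : ∀ v w, G.degree v = n - 3 → w ≠ v → ¬G.Adj v w →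
      G.neighborFinset w ⊆ G.neighborFinset v) : ¬Contains G (Tstar n) := by
  intro hT
  obtain ⟨v, u, w, x, hvu, huw, hwx, hvw, hvx, hux, hcard⟩ :=
    exists_adj_of_contains_tstar (by omega) hT
  have hu : u ∈ G.neighborFinset v := (G.mem_neighborFinset _ _).2 hvu
  have hsub : G.neighborFinset v \ {u, w, x} ⊆ (G.neighborFinset v).erase u :=
    fun z hz => by
      simp only [mem_sdiff, mem_insert, not_or] at hz
      exact mem_erase.2 ⟨hz.2.1, hz.1⟩
  have hdeg : G.degree v = n - 3 := by
    have := card_le_card hsub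
    rw [card_erase_of_mem hu, card_neighborFinset_eq_degree] at this
    have := hΔ v
    omega
  have hnot : ∀ y ∈ ({w, x} : Finset V), y ≠ u → ¬G.Adj v y := by
    intro y hy hyu hvy
    have : G.neighborFinset v \ {u, w, x} ⊆ ((G.neighborFinset v).erase u).erase y := by
      intro z hz
      simp only [mem_sdiff, mem_insert, mem_singleton, not_or] at hz hy
      refine mem_erase.2 ⟨?_, hsub (by simp [hz.1, hz.2])⟩
      rintro rfl
      tauto
    have := card_le_card this
    rw [card_erase_of_mem (mem_erase.2 ⟨hyu, (G.mem_neighborFinset _ _).2 hvy⟩),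
      card_erase_of_mem hu, card_neighborFinset_eq_degree] at this
    omega
  have hx := htwin v w hdeg hvw.symm (hnot w (by simp) huw.ne.symm)
    ((G.mem_neighborFinset _ _).2 hwx)
  exact hnot x (by simp) hux.symm ((G.mem_neighborFinset _ _).1 hx)

theorem card_sdiff_lt_of_not_contains_tstar (hn : 4 ≤ n) (hT : ¬Contains G (Tstar n))
    {v u w x : V} (hvu : G.Adj v u) (huw : G.Adj u w)
    (hwx : G.Adj w x) (hvw : v ≠ w) (hvx : v ≠ x) (hux : u ≠ x) :
    #(G.neighborFinset v \ {u, w, x}) < n - 4 :=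
  not_le.1 fun h => hT (contains_tstar_of_adj hn hvu huw hwx hvw hvx hux h)

theorem degree_le_of_not_contains_tstar (hn : 6 ≤ n) (hT : ¬Contains G (Tstar n))
    (hδ : ∀ v, n - 3 ≤ G.degree v) (v : V) : G.degree v ≤ n - 2 := by
  by_contra! hv
  obtain ⟨u, hvu, -⟩ := exists_adj_notMem_of_card_lt (G := G) (v := v) ∅ (by simp; omega)
  obtain ⟨w, huw, hw⟩ := exists_adj_notMem_of_card_lt (G := G) (v := u) {v}
    (by simp; have := hδ u; omega)
  obtain ⟨x, hwx, hx⟩ := exists_adj_notMem_of_card_lt (G := G) (v := w) {v, u}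
    (card_le_two.trans_lt (by have := hδ w; omega))
  simp only [mem_insert, mem_singleton, not_or] at hw hx
  have := card_sdiff_lt_of_not_contains_tstar (by omega) hT hvu huw hwx (Ne.symm hw)
    (Ne.symm hx.1) (Ne.symm hx.2)
  have := le_card_sdiff {u, w, x} (G.neighborFinset v)
  have := card_le_three (a := u) (b := w) (c := x)
  rw [card_neighborFinset_eq_degree] at *
  omega

theorem degree_eq_of_not_contains_tstar (hn : 6 ≤ n) (hT : ¬Contains G (Tstar n))
    (hδ : ∀ v, n - 3 ≤ G.degree v) (hV₁ : n ≤ Fintype.card V)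
    (hV₂ : Fintype.card V < 2 * (n - 2)) (v : V) : G.degree v = n - 3 := by
  by_contra hne
  have hv : G.degree v = n - 2 := by
    have := hδ v; have := degree_le_of_not_contains_tstar hn hT hδ v; omega
  have hclosed : ∀ s ∈ insert v (G.neighborFinset v), ∀ t, G.Adj s t →
      t ∈ insert v (G.neighborFinset v) := by
    intro s hs t hst
    simp only [mem_insert, mem_neighborFinset] at hs ⊢
    by_contra! ht
    obtain rfl | hvs := hs
    · exact ht.2 hst
    obtain ⟨x, htx, hx⟩ := exists_adj_notMem_of_card_lt (G := G) (v := t) {v, s}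
      (card_le_two.trans_lt (by have := hδ t; omega))
    simp only [mem_insert, mem_singleton, not_or] at hx
    have hlt := card_sdiff_lt_of_not_contains_tstar (by omega) hT hvs hst htx ht.1.symm
      (Ne.symm hx.1) (Ne.symm hx.2)
    rw [insert_comm, sdiff_insert_of_notMem (by simpa using ht.2)] at hlt
    have := le_card_sdiff {s, x} (G.neighborFinset v)
    have := card_le_two (a := s) (b := x)
    rw [card_neighborFinset_eq_degree] at *
    omega
  have huniv := eq_univ_of_closed hclosed hδ (by
    rw [card_insert_of_notMem (by simp), card_neighborFinset_eq_degree]; omega)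
  have := congrArg card huniv
  rw [card_insert_of_notMem (by simp), card_neighborFinset_eq_degree, card_univ] at this
  omega

theorem neighborFinset_eq_of_not_contains_tstar (hn : 6 ≤ n) (hT : ¬Contains G (Tstar n))
    (hδ : ∀ v, n - 3 ≤ G.degree v) (hV₁ : n ≤ Fintype.card V)
    (hV₂ : Fintype.card V < 2 * (n - 2)) {v u w : V} (hvu : G.Adj v u) (huw : G.Adj u w)
    (hvw : ¬G.Adj v w) (hwv : w ≠ v) : G.neighborFinset w = G.neighborFinset v := by
  have hdeg := degree_eq_of_not_contains_tstar hn hT hδ hV₁ hV₂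
  refine eq_of_subset_of_card_le (fun x hwx => ?_) (by simp only [card_neighborFinset_eq_degree,
    hdeg, le_refl])
  by_contra hvx
  rw [mem_neighborFinset] at hwx hvx
  have hlt := card_sdiff_lt_of_not_contains_tstar (by omega) hT hvu huw hwx hwv.symm
    (by rintro rfl; exact hvw hwx.symm) (by rintro rfl; exact hvx hvu)
  rw [insert_comm, sdiff_insert_of_notMem (by simpa using hvw), pair_comm,
    sdiff_insert_of_notMem (by simpa using hvx), sdiff_singleton_eq_erase,
    card_erase_of_mem ((G.mem_neighborFinset _ _).2 hvu), card_neighborFinset_eq_degree,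
    hdeg] at hlt
  omega

theorem card_twins_of_not_contains_tstar (hn : 6 ≤ n) (hT : ¬Contains G (Tstar n))
    (hδ : ∀ v, n - 3 ≤ G.degree v) (hV₁ : n ≤ Fintype.card V)
    (hV₂ : Fintype.card V < 2 * (n - 2)) (v : V) :
    #{z | G.neighborFinset z = G.neighborFinset v} = Fintype.card V - (n - 3) := by
  set A : Finset V := {z | G.neighborFinset z = G.neighborFinset v}
  have hvA : v ∈ A := by simp [A]
  have hdisj : Disjoint A (G.neighborFinset v) := by
    refine disjoint_left.2 fun z hz hvz => ?_
    rw [mem_filter] at hz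
    have : v ∈ G.neighborFinset v := by
      rw [← hz.2, mem_neighborFinset]; exact ((G.mem_neighborFinset _ _).1 hvz).symm
    simp at this
  have hclosed : ∀ s ∈ A ∪ G.neighborFinset v, ∀ t, G.Adj s t → t ∈ A ∪ G.neighborFinset v := by
    intro s hs t hst
    rw [mem_union] at hs ⊢
    obtain hs | hvs := hs
    · right
      rw [mem_filter] at hs
      rw [← hs.2, mem_neighborFinset]
      exact hst
    · by_cases hvt : G.Adj v t
      · exact Or.inr ((G.mem_neighborFinset _ _).2 hvt)
      by_cases htv : t = v
      · exact Or.inl (htv ▸ hvA)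
      · left
        rw [mem_neighborFinset] at hvs
        simpa [A] using neighborFinset_eq_of_not_contains_tstar hn hT hδ hV₁ hV₂ hvs hst hvt htv
  have hdeg : #(G.neighborFinset v) = n - 3 := by
    rw [card_neighborFinset_eq_degree, degree_eq_of_not_contains_tstar hn hT hδ hV₁ hV₂]
  have hcard := card_union_of_disjoint hdisj
  rw [eq_univ_of_closed hclosed hδ (by have := card_pos.2 ⟨v, hvA⟩; omega), card_univ] at hcard
  omega

theorem card_sub_dvd_card_of_not_contains_tstar (hn : 6 ≤ n) (hT : ¬Contains G (Tstar n))
    (hδ : ∀ v, n - 3 ≤ G.degree v) (hV₁ : n ≤ Fintype.card V)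
    (hV₂ : Fintype.card V < 2 * (n - 2)) : Fintype.card V - (n - 3) ∣ Fintype.card V := by
  have hsum := card_eq_sum_card_image (fun v => G.neighborFinset v) univ
  rw [sum_const_nat fun b hb => ?_, card_univ] at hsum
  · exact Dvd.intro_left _ hsum.symm
  · obtain ⟨v, -, rfl⟩ := mem_image.1 hb
    exact card_twins_of_not_contains_tstar hn hT hδ hV₁ hV₂ v

end FiniteGraph

namespace SimpleGraph

variable {α β : Type*} (G : SimpleGraph α) (H : SimpleGraph β)

def join : SimpleGraph (α ⊕ β) := (G ⊕g H) ⊔ completeBipartiteGraph α β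

variable {G H}

@[simp]
theorem join_adj_inl_inl {a a' : α} : (G.join H).Adj (.inl a) (.inl a') ↔ G.Adj a a' := by
  simp [join]

@[simp]
theorem join_adj_inr_inr {b b' : β} : (G.join H).Adj (.inr b) (.inr b') ↔ H.Adj b b' := by
  simp [join]

@[simp]
theorem join_adj_inl_inr {a : α} {b : β} : (G.join H).Adj (.inl a) (.inr b) := by
  simp [join]

@[simp]
theorem join_adj_inr_inl {a : α} {b : β} : (G.join H).Adj (.inr b) (.inl a) := by
  simp [join]

instance [DecidableRel G.Adj] [DecidableRel H.Adj] : DecidableRel (G.join H).Adj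
  | .inl _, .inl _ => decidable_of_iff' _ join_adj_inl_inl
  | .inr _, .inr _ => decidable_of_iff' _ join_adj_inr_inr
  | .inl _, .inr _ => isTrue join_adj_inl_inr
  | .inr _, .inl _ => isTrue join_adj_inr_inl

variable [Fintype α] [Fintype β] [DecidableRel G.Adj] [DecidableRel H.Adj]

theorem neighborFinset_join_inl (a : α) :
    (G.join H).neighborFinset (.inl a) = (G.neighborFinset a).disjSum univ := by
  ext (a' | b) <;> simp

theorem neighborFinset_join_inr (b : β) :
    (G.join H).neighborFinset (.inr b) = univ.disjSum (H.neighborFinset b) := by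
  ext (a | b') <;> simp

theorem degree_join_inl (a : α) : (G.join H).degree (.inl a) = G.degree a + Fintype.card β := by
  rw [← card_neighborFinset_eq_degree, neighborFinset_join_inl, card_disjSum,
    card_neighborFinset_eq_degree, card_univ]

theorem degree_join_inr (b : β) : (G.join H).degree (.inr b) = Fintype.card α + H.degree b := by
  rw [← card_neighborFinset_eq_degree, neighborFinset_join_inr, card_disjSum,
    card_neighborFinset_eq_degree, card_univ]

end SimpleGraph

theorem not_contains_tstar_join_bot {α β : Type*} [Fintype α] [Fintype β] [DecidableEq α]
    [DecidableEq β] {G : SimpleGraph α} [DecidableRel G.Adj] {n d : ℕ} (hn : 5 ≤ n)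
    (hG : ∀ a, G.degree a = d) (hα : Fintype.card α ≤ n - 3)
    (hd : d + Fintype.card β ≤ n - 4 ∨ d = 0 ∧ Fintype.card β ≤ n - 3) :
    ¬Contains (G.join (⊥ : SimpleGraph β)) (Tstar n) := by
  refine not_contains_tstar_of_twins hn ?_ ?_
  · rintro (a | b)
    · rw [degree_join_inl, hG]; omega
    · rw [degree_join_inr, bot_degree]; omega
  · rintro (a | b) (a' | b') hdeg hne hadj
    · rw [degree_join_inl, hG] at hdeg
      have hG0 : ∀ a, G.neighborFinset a = ∅ := fun a =>
        card_eq_zero.1 (by rw [card_neighborFinset_eq_degree, hG]; omega)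
      rw [neighborFinset_join_inl, neighborFinset_join_inl, hG0, hG0]
    · exact absurd join_adj_inl_inr hadj
    · exact absurd join_adj_inr_inl hadj
    · rw [neighborFinset_join_inr, neighborFinset_join_inr, neighborFinset_bot, neighborFinset_bot]

namespace SimpleGraph

variable {A : Type*} [AddCommGroup A] [Fintype A] [DecidableEq A]

theorem neighborFinset_circulantGraph {s : Finset A} (h0 : 0 ∉ s) (hneg : ∀ x ∈ s, -x ∈ s)
    (a : A) : (circulantGraph (s : Set A)).neighborFinset a = s.map (addLeftEmbedding a) := by
  ext b
  simp only [mem_neighborFinset, circulantGraph_adj, mem_coe, mem_map, addLeftEmbedding_apply]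
  constructor
  · rintro ⟨-, h | h⟩
    · exact ⟨-(a - b), hneg _ h, by abel⟩
    · exact ⟨b - a, h, by abel⟩
  · rintro ⟨x, hx, rfl⟩
    exact ⟨fun h => h0 ((show x = 0 by simpa using h) ▸ hx), Or.inr (by simpa using hx)⟩

theorem degree_circulantGraph {s : Finset A} (h0 : 0 ∉ s) (hneg : ∀ x ∈ s, -x ∈ s) (a : A) :
    (circulantGraph (s : Set A)).degree a = #s := by
  rw [← card_neighborFinset_eq_degree, neighborFinset_circulantGraph h0 hneg, card_map]

end SimpleGraph

theorem intCast_injOn_Icc {q h : ℕ} (hq : 2 * h < q) :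
    Set.InjOn (Int.cast : ℤ → ZMod q) (Icc (-h : ℤ) h) := by
  intro x hx y hy hxy
  rw [ZMod.intCast_eq_intCast_iff_dvd_sub] at hxy
  simp only [coe_Icc, Set.mem_Icc] at hx hy
  have := Int.eq_zero_of_abs_lt_dvd hxy (abs_lt.2 ⟨by omega, by omega⟩)
  omega

theorem degree_circulantGraph_Icc {q h : ℕ} [NeZero q] (hq : 2 * h < q) (a : ZMod q) :
    (circulantGraph
      ((((Icc (-h : ℤ) h).erase 0).image (Int.cast : ℤ → ZMod q)) : Set (ZMod q))).degree a =
      2 * h := by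
  rw [degree_circulantGraph, card_image_of_injOn ((intCast_injOn_Icc hq).mono (by simp)),
    card_erase_of_mem (by simp), Int.card_Icc]
  · omega
  · intro h0
    obtain ⟨x, hx, hx0⟩ := mem_image.1 h0
    rw [mem_erase, mem_Icc] at hx
    exact hx.1 (intCast_injOn_Icc hq (by simpa using hx.2) (by simp) (by simpa using hx0))
  · intro y hy
    obtain ⟨x, hx, rfl⟩ := mem_image.1 hy
    exact mem_image.2 ⟨-x, by simp at hx ⊢; omega, by simp⟩

/-- Sizes for the lower-bound graph: `q` circulant vertices of degree `2 * h`, joined to `r`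
independent vertices. -/
theorem exists_join_params {m n : ℕ} (hm : 3 ≤ m) (hmn : m < n) :
    ∃ q r h : ℕ, q + r = m + n - 5 ∧ 2 * h < q ∧ n - 4 ≤ q ∧ q ≤ n - 3 ∧ n - 4 ≤ 2 * h + r ∧
      (2 * h + r ≤ n - 4 ∨ h = 0 ∧ r ≤ n - 3) := by
  obtain ⟨k, hk | hk⟩ := Nat.even_or_odd' (n - m)
  · exact ⟨n - 3, m - 2, k - 1, by omega, by omega, by omega, by omega, by omega, by omega⟩
  · rcases Nat.eq_zero_or_pos k with rfl | hk0
    · exact ⟨n - 3, n - 3, 0, by omega, by omega, by omega, by omega, by omega, by omega⟩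
    · exact ⟨n - 4, m - 1, k - 1, by omega, by omega, by omega, by omega, by omega, by omega⟩

theorem contains_starGraph_or_compl_contains_tstar {m n : ℕ} (hm : 7 ≤ m) (hmn : m < n)
    (hndvd : ¬ (m - 1) ∣ (n - 3)) (G : SimpleGraph (Fin (m + n - 4))) :
    Contains G (_root_.starGraph m) ∨ Contains Gᶜ (Tstar n) := by
  classical
  refine or_iff_not_imp_left.2 fun hG => ?_
  by_contra hT
  simp only [contains_starGraph_iff (by omega : 1 ≤ m), not_exists, not_le] at hG
  have hδ : ∀ v, n - 3 ≤ Gᶜ.degree v := fun v => by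
    rw [degree_compl, Fintype.card_fin]; have := hG v; omega
  have := card_sub_dvd_card_of_not_contains_tstar (by omega) hT hδ (by simp; omega)
    (by simp; omega)
  rw [Fintype.card_fin, show m + n - 4 - (n - 3) = m - 1 by omega,
    show m + n - 4 = (m - 1) + (n - 3) by omega] at this
  exact hndvd ((Nat.dvd_add_right dvd_rfl).1 this)

theorem stmt12 {m n : ℕ} (hm : 7 ≤ m) (hmn : m < n) (hndvd : ¬ (m - 1) ∣ (n - 3)) :
    ramsey (_root_.starGraph m) (Tstar n) = m + n - 4 := by
  obtain ⟨q, r, h, hqr, hhq, hq₁, hq₂, hr₁, hr₂⟩ := exists_join_params (by omega) hmn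
  have : NeZero q := ⟨by omega⟩
  let C := circulantGraph
    ((((Icc (-h : ℤ) h).erase 0).image (Int.cast : ℤ → ZMod q)) : Set (ZMod q))
  have hC : ∀ a, C.degree a = 2 * h := degree_circulantGraph_Icc hhq
  have hcard : Fintype.card (ZMod q ⊕ Fin r) = m + n - 5 := by simp [hqr]
  refine ramsey_eq_of_witness (contains_starGraph_or_compl_contains_tstar hm hmn hndvd)
    (C.join (⊥ : SimpleGraph (Fin r)))ᶜ (by omega) ?_ ?_
  · rw [contains_starGraph_iff (by omega)]
    rintro ⟨v, hv⟩
    rw [degree_compl, hcard] at hv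
    rcases v with a | b
    · rw [degree_join_inl, hC, Fintype.card_fin] at hv; omega
    · rw [degree_join_inr, bot_degree, ZMod.card] at hv; omega
  · rw [compl_compl]
    exact not_contains_tstar_join_bot (by omega) hC (by rwa [ZMod.card])
      (by rw [Fintype.card_fin]; omega)
end

section
/- Let m, n ∈ ℕ with n > m ≥ 7, n = k(m-1) + b with k ≥ 1, b ∈ {0,1,…,m-2}, b ≠ 3, and (m-b)/2 ≤ k ≤ m+2-b. Then the graph G = (2k+b-m)K_{m-2} ∪ (m+2-b-k)K_{m-3} has exactly m+n-6 vertices, each component of G has fewer than m vertices, and the complement of G has maximum degree at most n-3; consequently r(G_m, T_n*) > m+n-6 for every connected graph G_m of order m. -/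
open SimpleGraph

/-!
The graph `G` is a disjoint union of cliques, the fibres of `blockColor`, each of order `m - 2`
or `m - 3`; a connected graph on `m` vertices embedded in `G` would have to fit into one of them.
The complement of `G` is complete multipartite with maximum degree `(m + n - 6) - (m - 3) = n - 3`.
In a copy of `Tₙ*` in such a graph the `n - 3` leaves at the centre exhaust the centre's
neighbourhood, so the two remaining vertices lie in the centre's part and are non-adjacent,
although they span an edge of `Tₙ*`. Restricting `G` to initial segments shows that no
`N ≤ m + n - 6` has the Ramsey property; the finite Ramsey theorem is needed only to know that
the Ramsey number is not the junk value `sInf ∅ = 0`.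
-/

open Finset

theorem Contains.of_embedding {V V' W : Type*} {G : SimpleGraph V} {G' : SimpleGraph V'}
    {H : SimpleGraph W} (h : Contains G H) (e : G ↪g G') : Contains G' H := by
  obtain ⟨f, hf⟩ := h
  exact ⟨f.trans e.toEmbedding, fun a b hab => e.map_adj_iff.mpr (hf a b hab)⟩

theorem contains_of_isNClique {V W : Type*} [Fintype W] {G : SimpleGraph V} {A : Finset V}
    (hA : G.IsNClique (Fintype.card W) A) (H : SimpleGraph W) : Contains G H := by
  let f : W ↪ V := ((Fintype.equivFin W).trans (finCongr hA.card_eq.symm)).toEmbedding.trans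
    (A.equivFin.symm.toEmbedding.trans (Function.Embedding.subtype _))
  have hfA : ∀ a, f a ∈ A := fun a => (A.equivFin.symm _).2
  exact ⟨f, fun a b hab => hA.isClique (hfA a) (hfA b) (f.injective.ne hab.ne)⟩

theorem exists_isNClique_or_isNClique_compl {V : Type*} (G : SimpleGraph V) :
    ∀ s t (W : Finset V), (s + t).choose s ≤ #W →
      (∃ A ⊆ W, G.IsNClique s A) ∨ ∃ B ⊆ W, Gᶜ.IsNClique t B
  | 0, _, _, _ => Or.inl ⟨∅, empty_subset _, by simp⟩
  | _ + 1, 0, _, _ => Or.inr ⟨∅, empty_subset _, by simp⟩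
  | s + 1, t + 1, W, hW => by
    classical
    obtain ⟨v, hv⟩ : W.Nonempty := card_pos.mp ((Nat.choose_pos (by omega)).trans_le hW)
    set N := (W.erase v).filter (G.Adj v)
    set M := (W.erase v).filter (fun w => ¬ G.Adj v w)
    have hNW : N ⊆ W := (filter_subset _ _).trans (erase_subset _ _)
    have hMW : M ⊆ W := (filter_subset _ _).trans (erase_subset _ _)
    have hNM : #N + #M + 1 = #W := by
      rw [card_filter_add_card_filter_not, card_erase_add_one hv]
    have hpascal : (s + 1 + (t + 1)).choose (s + 1) =
        (s + (t + 1)).choose s + (s + 1 + t).choose (s + 1) := by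
      rw [show s + 1 + (t + 1) = s + 1 + t + 1 by omega, Nat.choose_succ_succ',
        show s + 1 + t = s + (t + 1) by omega]
    by_cases hN : (s + (t + 1)).choose s ≤ #N
    · rcases exists_isNClique_or_isNClique_compl G s (t + 1) N hN with
        ⟨A, hA, hcl⟩ | ⟨B, hB, hcl⟩
      · exact Or.inl ⟨insert v A, insert_subset hv (hA.trans hNW),
          hcl.insert fun a ha => (mem_filter.mp (hA ha)).2⟩
      · exact Or.inr ⟨B, hB.trans hNW, hcl⟩
    · rcases exists_isNClique_or_isNClique_compl G (s + 1) t M (by omega) with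
        ⟨A, hA, hcl⟩ | ⟨B, hB, hcl⟩
      · exact Or.inl ⟨A, hA.trans hMW, hcl⟩
      · refine Or.inr ⟨insert v B, insert_subset hv (hB.trans hMW), hcl.insert fun w hw => ?_⟩
        obtain ⟨hwW, hvw⟩ := mem_filter.mp (hB hw)
        exact (compl_adj G v w).mpr ⟨(ne_of_mem_erase hwW).symm, hvw⟩
termination_by s t => s + t

theorem exists_ramsey_bound {V W : Type*} [Fintype V] [Fintype W] (G₁ : SimpleGraph V)
    (G₂ : SimpleGraph W) :
    ∃ N, 0 < N ∧ ∀ G : SimpleGraph (Fin N), Contains G G₁ ∨ Contains Gᶜ G₂ := by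
  set p := Fintype.card V
  set q := Fintype.card W
  refine ⟨(p + q).choose p, Nat.choose_pos (by omega), fun G => ?_⟩
  rcases exists_isNClique_or_isNClique_compl G p q univ (by simp) with
    ⟨A, -, hA⟩ | ⟨B, -, hB⟩
  exacts [Or.inl (contains_of_isNClique hA G₁), Or.inr (contains_of_isNClique hB G₂)]

theorem lt_ramsey_of_not_contains {V W : Type*} [Fintype V] [Fintype W] {G₁ : SimpleGraph V}
    {G₂ : SimpleGraph W} {N : ℕ} (G : SimpleGraph (Fin N)) (h₁ : ¬ Contains G G₁)
    (h₂ : ¬ Contains Gᶜ G₂) : N < ramsey G₁ G₂ := by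
  by_contra! hle
  obtain ⟨-, hr⟩ := Nat.sInf_mem (exists_ramsey_bound G₁ G₂)
  let e := Embedding.comap (Fin.castLEEmb hle) G
  rcases hr (G.comap (Fin.castLEEmb hle)) with h | h
  exacts [h₁ (h.of_embedding e), h₂ (h.of_embedding (Embedding.complEquiv e))]

theorem tstar_adj_zero {n i : ℕ} (hi₁ : 1 ≤ i) (hi₂ : i ≤ n - 3) :
    (Tstar n).Adj ⟨0, by omega⟩ ⟨i, by omega⟩ := by
  simp only [Tstar, fromRel_adj, ne_eq, Fin.mk.injEq, true_and]
  omega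

theorem tstar_adj_last {n : ℕ} (hn : 3 ≤ n) :
    (Tstar n).Adj ⟨n - 2, by omega⟩ ⟨n - 1, by omega⟩ := by
  simp only [Tstar, fromRel_adj, ne_eq, Fin.mk.injEq, or_true, and_true, true_or]
  omega

theorem not_contains_tstar {V : Type*} [Finite V] {K : SimpleGraph V}
    (hK : K.IsCompleteMultipartite) {n : ℕ} (hn : 3 ≤ n)
    (hdeg : ∀ v, (K.neighborSet v).ncard ≤ n - 3) : ¬ Contains K (Tstar n) := by
  rintro ⟨f, hf⟩
  let leaf : Fin (n - 3) → V := fun i => f ⟨i + 1, by omega⟩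
  have hleaf : leaf.Injective := fun i j h => Fin.ext (by simpa using f.injective h)
  have hrange : Set.range leaf = K.neighborSet (f ⟨0, by omega⟩) := by
    refine Set.eq_of_subset_of_ncard_le ?_ ?_ (Set.toFinite _)
    · rintro _ ⟨i, rfl⟩
      exact hf _ _ (tstar_adj_zero (by omega) (by omega))
    · rw [Set.ncard_range_of_injective hleaf, Nat.card_eq_fintype_card, Fintype.card_fin]
      exact hdeg _
  have hfar : ∀ j : Fin n, n - 3 < j.val → ¬ K.Adj (f ⟨0, by omega⟩) (f j) := by
    intro j hj hadj
    obtain ⟨i, hi⟩ : f j ∈ Set.range leaf := hrange ▸ hadj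
    have := congrArg Fin.val (f.injective hi)
    simp only at this
    omega
  exact hK.trans _ _ _ (fun h => hfar _ (by simp only; omega) h.symm)
    (hfar _ (by simp only; omega)) (hf _ _ (tstar_adj_last hn))

theorem SimpleGraph.Reachable.apply_eq_of_adj {V β : Type*} {G : SimpleGraph V} {g : V → β}
    (hg : ∀ u v, G.Adj u v → g u = g v) {u v : V} (h : G.Reachable u v) : g u = g v := by
  rw [reachable_iff_reflTransGen] at h
  induction h with
  | refl => rfl
  | tail _ hadj ih => exact ih.trans (hg _ _ hadj)

section Fibers

variable {V α : Type*} (c : V → α)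

theorem isCompleteMultipartite_comap_top :
    ((⊤ : SimpleGraph α).comap c).IsCompleteMultipartite :=
  ⟨fun u v w huv hvw => by simp_all⟩

variable [Fintype V] [DecidableEq α]

theorem ncard_neighborSet_comap_top (v : V) :
    (((⊤ : SimpleGraph α).comap c).neighborSet v).ncard = Fintype.card V - #{w | c w = c v} := by
  have hnbr : ((⊤ : SimpleGraph α).comap c).neighborSet v = ↑({w | c w ≠ c v} : Finset V) := by
    ext w
    simp [eq_comm]
  have := card_filter_add_card_filter_not (s := univ) (fun w => c w = c v)
  rw [card_univ] at this
  rw [hnbr, Set.ncard_coe_finset]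
  simp only [ne_eq]
  omega

theorem not_contains_compl_comap_top {W : Type*} [Fintype W] {H : SimpleGraph W}
    (hH : H.Connected) (hc : ∀ v, #{w | c w = c v} < Fintype.card W) :
    ¬ Contains ((⊤ : SimpleGraph α).comap c)ᶜ H := by
  rintro ⟨f, hf⟩
  obtain ⟨x₀⟩ := hH.nonempty
  have hconst : ∀ x, c (f x) = c (f x₀) := fun x =>
    (hH x x₀).apply_eq_of_adj (g := c ∘ f)
      fun a b hab => by simpa using ((compl_adj _ _ _).mp (hf a b hab)).2
  have := card_le_card_of_injOn (s := univ) (t := {w | c w = c (f x₀)}) f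
    (fun x _ => by simp [hconst x]) f.injective.injOn
  simp only [card_univ] at this
  exact (hc _).not_ge this

end Fibers

theorem div_mul_add_le_of_lt_mul {x y k : ℕ} (h : x < y * k) : x / k * k + k ≤ y * k := by
  have hk : 0 < k := Nat.pos_of_ne_zero (by rintro rfl; simp at h)
  calc x / k * k + k = (x / k + 1) * k := by ring
    _ ≤ y * k := Nat.mul_le_mul_right _ ((Nat.div_lt_iff_lt_mul hk).mpr h)

theorem card_filter_fin_eq_of_iff {N a s : ℕ} (hs : a + s ≤ N) {p : Fin N → Prop}
    [DecidablePred p] (hp : ∀ w : Fin N, p w ↔ a ≤ w.val ∧ w.val < a + s) :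
    #{w | p w} = s := by
  have hIco : ({w | p w} : Finset (Fin N)).map Fin.valEmbedding = Ico a (a + s) := by
    ext x
    simp only [mem_map, mem_filter, mem_univ, true_and, Fin.valEmbedding_apply, hp, mem_Ico]
    constructor
    · rintro ⟨w, hw, rfl⟩
      exact hw
    · exact fun hx => ⟨⟨x, by omega⟩, hx, rfl⟩
  rw [← card_map, hIco, Nat.card_Ico]
  omega

def blockColor (t d e w : ℕ) : ℕ ⊕ ℕ :=
  if w < t then .inl (w / d) else .inr ((w - t) / e)

theorem blockColor_eq_iff_of_lt {q d e v w : ℕ} (hv : v < q * d) :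
    blockColor (q * d) d e w = blockColor (q * d) d e v ↔ v / d * d ≤ w ∧ w < v / d * d + d := by
  have hd : 0 < d := Nat.pos_of_ne_zero (by rintro rfl; simp at hv)
  have hblock := div_mul_add_le_of_lt_mul hv
  unfold blockColor
  split_ifs with hw
  · rw [Sum.inl.injEq, Nat.div_eq_iff hd]
    omega
  · simp only [false_iff]
    omega

theorem blockColor_eq_iff_of_le {t d e v w : ℕ} (he : 0 < e) (hv : t ≤ v) :
    blockColor t d e w = blockColor t d e v ↔
      t + (v - t) / e * e ≤ w ∧ w < t + (v - t) / e * e + e := by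
  unfold blockColor
  split_ifs with hw hv'
  · omega
  · simp only [false_iff]
    omega
  · omega
  · rw [Sum.inr.injEq, Nat.div_eq_iff he]
    omega

theorem card_fiber_blockColor {q d r e N : ℕ} (he : 0 < e) (hN : N = q * d + r * e)
    (v : Fin N) :
    #{w : Fin N | blockColor (q * d) d e w = blockColor (q * d) d e v} ∈ ({d, e} : Finset ℕ) := by
  rw [mem_insert, mem_singleton]
  by_cases hv : v.val < q * d
  · have := div_mul_add_le_of_lt_mul hv
    exact Or.inl (card_filter_fin_eq_of_iff (by omega) fun w => blockColor_eq_iff_of_lt hv)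
  · have := div_mul_add_le_of_lt_mul (x := v.val - q * d) (y := r) (k := e) (by omega)
    exact Or.inr (card_filter_fin_eq_of_iff (by omega) fun w =>
      blockColor_eq_iff_of_le he (Nat.le_of_not_lt hv))

theorem stmt17_general {m n k b : ℕ} (hm : 7 ≤ m) (hmn : m < n)
    (hk : 1 ≤ k) (hn : n = k * (m - 1) + b)
    (hk1 : m - b ≤ 2 * k) (hk2 : k ≤ m + 2 - b) :
    let t : ℕ := (2 * k + b - m) * (m - 2)
    let G : SimpleGraph (Fin (m + n - 6)) :=
      SimpleGraph.fromRel (fun u v =>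
        (u.val < t ∧ v.val < t ∧ u.val / (m - 2) = v.val / (m - 2)) ∨
        (t ≤ u.val ∧ t ≤ v.val ∧ (u.val - t) / (m - 3) = (v.val - t) / (m - 3)))
    (2 * k + b - m) * (m - 2) + (m + 2 - b - k) * (m - 3) = m + n - 6 ∧
    (∀ H : SimpleGraph (Fin m), H.Connected → ¬ Contains G H) ∧
    (∀ v, (Gᶜ.neighborSet v).ncard ≤ n - 3) ∧
    (∀ Gm : SimpleGraph (Fin m), Gm.Connected → m + n - 6 < ramsey Gm (Tstar n)) := by
  intro t G
  have hsize : (2 * k + b - m) * (m - 2) + (m + 2 - b - k) * (m - 3) = m + n - 6 := by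
    zify [show 1 ≤ m by omega] at hn
    zify [show m ≤ 2 * k + b by omega, show b ≤ m + 2 by omega, hk2,
      show 2 ≤ m by omega, show 3 ≤ m by omega, show 6 ≤ m + n by omega]
    rw [hn]
    ring
  let c : Fin (m + n - 6) → ℕ ⊕ ℕ := fun w => blockColor t (m - 2) (m - 3) w
  have hG : G = ((⊤ : SimpleGraph (ℕ ⊕ ℕ)).comap c)ᶜ := by
    have hrel : ∀ u v : Fin (m + n - 6),
        ((u.val < t ∧ v.val < t ∧ u.val / (m - 2) = v.val / (m - 2)) ∨
          (t ≤ u.val ∧ t ≤ v.val ∧ (u.val - t) / (m - 3) = (v.val - t) / (m - 3))) ↔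
        c u = c v := by
      intro u v
      simp only [c, blockColor]
      split_ifs <;> simp <;> omega
    ext u v
    rw [fromRel_adj, compl_adj, comap_adj, top_adj, hrel, hrel, not_not, eq_comm (a := c v),
      or_self]
  have hfiber (v : Fin (m + n - 6)) : m - 3 ≤ #{w | c w = c v} ∧ #{w | c w = c v} ≤ m - 2 := by
    have : #{w | c w = c v} ∈ ({m - 2, m - 3} : Finset ℕ) :=
      card_fiber_blockColor (r := m + 2 - b - k) (by omega) hsize.symm v
    simp only [mem_insert, mem_singleton] at this
    omega
  have hdeg (v : Fin (m + n - 6)) : (Gᶜ.neighborSet v).ncard ≤ n - 3 := by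
    rw [hG, compl_compl, ncard_neighborSet_comap_top, Fintype.card_fin]
    have := hfiber v
    omega
  have hfree (H : SimpleGraph (Fin m)) (hH : H.Connected) : ¬ Contains G H := by
    rw [hG]
    refine not_contains_compl_comap_top c hH fun v => ?_
    have := hfiber v
    rw [Fintype.card_fin]
    omega
  have htree : ¬ Contains Gᶜ (Tstar n) := by
    refine not_contains_tstar ?_ (by omega) hdeg
    rw [hG, compl_compl]
    exact isCompleteMultipartite_comap_top c
  exact ⟨hsize, hfree, hdeg, fun Gm hGm => lt_ramsey_of_not_contains G (hfree Gm hGm) htree⟩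

theorem stmt17 {m n k b : ℕ} (hm : 7 ≤ m) (hmn : m < n)
    (hk : 1 ≤ k) (hb : b ≤ m - 2) (hb3 : b ≠ 3) (hn : n = k * (m - 1) + b)
    (hk1 : m - b ≤ 2 * k) (hk2 : k ≤ m + 2 - b) :
    let t : ℕ := (2 * k + b - m) * (m - 2)
    let G : SimpleGraph (Fin (m + n - 6)) :=
      SimpleGraph.fromRel (fun u v =>
        (u.val < t ∧ v.val < t ∧ u.val / (m - 2) = v.val / (m - 2)) ∨
        (t ≤ u.val ∧ t ≤ v.val ∧ (u.val - t) / (m - 3) = (v.val - t) / (m - 3)))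
    (2 * k + b - m) * (m - 2) + (m + 2 - b - k) * (m - 3) = m + n - 6 ∧
    (∀ H : SimpleGraph (Fin m), H.Connected → ¬ Contains G H) ∧
    (∀ v, (Gᶜ.neighborSet v).ncard ≤ n - 3) ∧
    (∀ Gm : SimpleGraph (Fin m), Gm.Connected → m + n - 6 < ramsey Gm (Tstar n)) :=
  stmt17_general hm hmn hk hn hk1 hk2
end
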